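/- arXiv:1707.02632 — 3 statements merged into one kernel-verified Lean document; each statement's English description precedes it below -/
import Mathlib

section
/- Let E be a symmetric Banach function space on I=[0,α) with the Fatou property. If x∈E is a point of K-order continuity and an LKM point and x*(∞)=0, then x is an LLUKM point. -/
open MeasureTheory Filter Topology Set
open scoped ENNReal

noncomputable section

/-- Lebesgue measure restricted to the interval `I = [0, α)`, where `α : ℝ≥0∞`. -/
def muI (α : ℝ≥0∞) : Measure ℝ :=
  volume.restrict {s : ℝ | 0 ≤ s ∧ ENNReal.ofReal s < α}

/-- The distribution function `d_x(λ) = μ{s ∈ I : |x(s)| > λ}`. -/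
def distr (α : ℝ≥0∞) (x : ℝ → ℝ) (lam : ℝ) : ℝ≥0∞ :=
  muI α {s : ℝ | lam < |x s|}

/-- The decreasing rearrangement `x*(t) = inf{λ > 0 : d_x(λ) ≤ t}`. -/
def rearr (α : ℝ≥0∞) (x : ℝ → ℝ) (t : ℝ) : ℝ :=
  sInf {lam : ℝ | 0 < lam ∧ distr α x lam ≤ ENNReal.ofReal t}

/-- The maximal function `x**(t) = (1/t) ∫₀ᵗ x*(s) ds`. -/
def maxf (α : ℝ≥0∞) (x : ℝ → ℝ) (t : ℝ) : ℝ :=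
  (∫ s in Set.Ioc (0 : ℝ) t, rearr α x s) / t

/-- The Hardy–Littlewood–Pólya relation `x ≺ y`, i.e. `x**(t) ≤ y**(t)` for all `t > 0`. -/
def HLP (α : ℝ≥0∞) (x y : ℝ → ℝ) : Prop :=
  ∀ t : ℝ, 0 < t → maxf α x t ≤ maxf α y t

/-- `x*(∞) = 0`: automatic when `α ≠ ∞`, and `lim_{t→∞} x*(t) = 0` when `α = ∞`. -/
def rearrInftyZero (α : ℝ≥0∞) (x : ℝ → ℝ) : Prop :=
  α = ∞ → Tendsto (rearr α x) atTop (𝓝 0)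

/-- A symmetric Banach function space on `[0, α)` with the Fatou property. -/
structure SymmetricBFS (α : ℝ≥0∞) where
  /-- membership in the space `E` -/
  Mem : (ℝ → ℝ) → Prop
  /-- the norm of `E` -/
  N : (ℝ → ℝ) → ℝ
  mem_aemeasurable : ∀ ⦃x⦄, Mem x → AEMeasurable x (muI α)
  zero_mem : Mem 0
  add_mem : ∀ ⦃x y⦄, Mem x → Mem y → Mem (x + y)
  smul_mem : ∀ (c : ℝ) ⦃x⦄, Mem x → Mem (c • x)
  norm_nonneg' : ∀ x, 0 ≤ N x
  norm_zero' : N 0 = 0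
  norm_add_le : ∀ x y, N (x + y) ≤ N x + N y
  norm_smul' : ∀ (c : ℝ) (x : ℝ → ℝ), N (c • x) = |c| * N x
  norm_eq_zero_iff : ∀ ⦃x⦄, Mem x → (N x = 0 ↔ (∀ᵐ s ∂(muI α), x s = 0))
  /-- the ideal (Banach function space) property -/
  ideal : ∀ ⦃x y⦄, AEMeasurable x (muI α) → Mem y →
    (∀ᵐ s ∂(muI α), |x s| ≤ |y s|) → Mem x ∧ N x ≤ N y
  /-- there is a strictly positive element -/
  exists_strictPos : ∃ x, Mem x ∧ ∀ᵐ s ∂(muI α), 0 < x s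
  /-- norm completeness -/
  complete : ∀ u : ℕ → ℝ → ℝ, (∀ n, Mem (u n)) →
    (∀ ε : ℝ, 0 < ε → ∃ n₀ : ℕ, ∀ m n, n₀ ≤ m → n₀ ≤ n → N (u m - u n) < ε) →
    ∃ x, Mem x ∧ Tendsto (fun n => N (u n - x)) atTop (𝓝 0)
  /-- symmetry: equimeasurable functions have equal norms -/
  symmetric : ∀ ⦃x y⦄, AEMeasurable x (muI α) → Mem y →
    distr α x = distr α y → Mem x ∧ N x = N y
  /-- the Fatou property -/
  fatou : ∀ (u : ℕ → ℝ → ℝ) (x : ℝ → ℝ), (∀ n, Mem (u n)) →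
    AEMeasurable x (muI α) →
    (∀ n, ∀ᵐ s ∂(muI α), 0 ≤ u n s) →
    (∀ n, ∀ᵐ s ∂(muI α), u n s ≤ u (n + 1) s) →
    (∀ᵐ s ∂(muI α), Tendsto (fun n => u n s) atTop (𝓝 (x s))) →
    (∃ C : ℝ, ∀ n, N (u n) ≤ C) →
    Mem x ∧ Tendsto (fun n => N (u n)) atTop (𝓝 (N x))

variable {α : ℝ≥0∞}

/-- The fundamental function `φ(t) = ‖χ_{(0,t)}‖_E`. -/
def SymmetricBFS.fund (E : SymmetricBFS α) (t : ℝ) : ℝ :=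
  E.N (Set.indicator (Set.Ioo 0 t) fun _ => (1 : ℝ))

/-- `x` is a point of lower local uniform `K`-monotonicity (`LLUKM` point). -/
def SymmetricBFS.IsLLUKMPoint (E : SymmetricBFS α) (x : ℝ → ℝ) : Prop :=
  ∀ u : ℕ → ℝ → ℝ, (∀ n, E.Mem (u n)) → (∀ n, HLP α (u n) x) →
    Tendsto (fun n => E.N (u n)) atTop (𝓝 (E.N x)) →
    Tendsto (fun n => E.N (rearr α (u n) - rearr α x)) atTop (𝓝 0)

/-- `x` is a point of upper local uniform `K`-monotonicity (`ULUKM` point). -/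
def SymmetricBFS.IsULUKMPoint (E : SymmetricBFS α) (x : ℝ → ℝ) : Prop :=
  ∀ u : ℕ → ℝ → ℝ, (∀ n, E.Mem (u n)) → (∀ n, HLP α x (u n)) →
    Tendsto (fun n => E.N (u n)) atTop (𝓝 (E.N x)) →
    Tendsto (fun n => E.N (rearr α x - rearr α (u n))) atTop (𝓝 0)

/-- `x` is a point of lower `K`-monotonicity (`LKM` point). -/
def SymmetricBFS.IsLKMPoint (E : SymmetricBFS α) (x : ℝ → ℝ) : Prop :=
  ∀ y : ℝ → ℝ, E.Mem y → HLP α y x → rearr α y ≠ rearr α x → E.N y < E.N x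

/-- `x` is a point of order continuity. -/
def SymmetricBFS.IsOCPoint (E : SymmetricBFS α) (x : ℝ → ℝ) : Prop :=
  ∀ u : ℕ → ℝ → ℝ, (∀ n, E.Mem (u n)) →
    (∀ n, ∀ᵐ s ∂(muI α), 0 ≤ u n s ∧ u n s ≤ |x s|) →
    (∀ᵐ s ∂(muI α), Tendsto (fun n => u n s) atTop (𝓝 0)) →
    Tendsto (fun n => E.N (u n)) atTop (𝓝 0)

/-- `x` is a point of `K`-order continuity. -/
def SymmetricBFS.IsKOCPoint (E : SymmetricBFS α) (x : ℝ → ℝ) : Prop :=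
  ∀ u : ℕ → ℝ → ℝ, (∀ n, E.Mem (u n)) → (∀ n, HLP α (u n) x) →
    (∀ᵐ s ∂(muI α), Tendsto (fun n => rearr α (u n) s) atTop (𝓝 0)) →
    Tendsto (fun n => E.N (u n)) atTop (𝓝 0)

/-- `x` is an `H_g` point (Kadec–Klee point for global convergence in measure). -/
def SymmetricBFS.IsHgPoint (E : SymmetricBFS α) (x : ℝ → ℝ) : Prop :=
  ∀ u : ℕ → ℝ → ℝ, (∀ n, E.Mem (u n)) →
    TendstoInMeasure (muI α) u atTop x →
    Tendsto (fun n => E.N (u n)) atTop (𝓝 (E.N x)) →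
    Tendsto (fun n => E.N (u n - x)) atTop (𝓝 0)

/-- `x` is an `H_l` point (Kadec–Klee point for local convergence in measure). -/
def SymmetricBFS.IsHlPoint (E : SymmetricBFS α) (x : ℝ → ℝ) : Prop :=
  ∀ u : ℕ → ℝ → ℝ, (∀ n, E.Mem (u n)) →
    (∀ A : Set ℝ, muI α A < ∞ → TendstoInMeasure ((muI α).restrict A) u atTop x) →
    Tendsto (fun n => E.N (u n)) atTop (𝓝 (E.N x)) →
    Tendsto (fun n => E.N (u n - x)) atTop (𝓝 0)

/-- A nonnegative `x` is an `LLUM` point (point of lower local uniform monotonicity). -/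
def SymmetricBFS.IsLLUMPoint (E : SymmetricBFS α) (x : ℝ → ℝ) : Prop :=
  ∀ u : ℕ → ℝ → ℝ, (∀ n, E.Mem (u n)) →
    (∀ n, ∀ᵐ s ∂(muI α), 0 ≤ u n s ∧ u n s ≤ x s) →
    Tendsto (fun n => E.N (u n)) atTop (𝓝 (E.N x)) →
    Tendsto (fun n => E.N (u n - x)) atTop (𝓝 0)

/-- A nonnegative `x` is a `ULUM` point (point of upper local uniform monotonicity). -/
def SymmetricBFS.IsULUMPoint (E : SymmetricBFS α) (x : ℝ → ℝ) : Prop :=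
  ∀ u : ℕ → ℝ → ℝ, (∀ n, E.Mem (u n)) →
    (∀ n, ∀ᵐ s ∂(muI α), x s ≤ u n s) →
    Tendsto (fun n => E.N (u n)) atTop (𝓝 (E.N x)) →
    Tendsto (fun n => E.N (u n - x)) atTop (𝓝 0)

/-!
Given `uₙ ≺ x` with `‖uₙ‖ → ‖x‖`, it suffices to find, inside any subsequence, a further one with
`‖uₙ* - x*‖ → 0`. Helly's selection theorem gives one along which `uₙ*` converges a.e. on `(0, ∞)`
to a decreasing right-continuous `v`, and the Fatou property gives `v ∈ E`.
The excesses `(uₙ* - v)⁺` are dominated by `uₙ* ≺ x`, tend to `0` a.e. and are uniformly small at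
infinity because `x** → 0` (this is where `x*(∞) = 0` enters); so `K`-order continuity makes their
norms tend to `0`, whence `‖x‖ ≤ ‖v‖`. Passing to the limit in `∫₀ᵗ uₙ* ≤ t x**(t)` gives `v ≺ x`,
so `v = x*` by lower `K`-monotonicity, and the same argument applied to the deficits
`(x* - uₙ*)⁺` concludes.
-/

lemma HLP.trans {x y z : ℝ → ℝ} (hyz : HLP α y z) (hzx : HLP α z x) : HLP α y x :=
  fun t ht => (hyz t ht).trans (hzx t ht)

lemma Filter.Tendsto.iInf_tail {f : ℕ → ℝ} {a : ℝ} (hf : Tendsto f atTop (𝓝 a)) :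
    Tendsto (fun m => ⨅ k, f (m + k)) atTop (𝓝 a) := by
  have hbdd : ∀ m, BddBelow (range fun k => f (m + k)) := fun m =>
    hf.bddBelow_range.mono (range_comp_subset_range (m + ·) f)
  refine tendsto_order.2 ⟨fun b hb => ?_, fun b hb => ?_⟩
  · obtain ⟨b', hbb', hb'a⟩ := exists_between hb
    obtain ⟨N, hN⟩ := eventually_atTop.1 (hf.eventually (lt_mem_nhds hb'a))
    filter_upwards [eventually_ge_atTop N] with m hm
    exact hbb'.trans_le (le_ciInf fun k => (hN _ (by omega)).le)
  · filter_upwards [hf.eventually (gt_mem_nhds hb)] with m hm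
    exact (ciInf_le (hbdd m) 0).trans_lt hm

namespace Rearrangement

def Ipos (D : ℝ≥0∞) : Set ℝ := {s : ℝ | 0 < s ∧ ENNReal.ofReal s < D}

lemma measurableSet_Ipos (D : ℝ≥0∞) : MeasurableSet (Ipos D) :=
  measurableSet_Ioi.inter (ENNReal.measurable_ofReal measurableSet_Iio)

lemma volume_Ipos (D : ℝ≥0∞) : volume (Ipos D) = D := by
  rcases eq_or_ne D ∞ with rfl | hD
  · have : Ipos ∞ = Ioi 0 := by ext s; simp [Ipos]
    rw [this, Real.volume_Ioi]
  · have : Ipos D = Ioo 0 D.toReal := by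
      ext s
      exact and_congr_right fun hs => ENNReal.ofReal_lt_iff_lt_toReal hs.le hD
    rw [this, Real.volume_Ioo, sub_zero, ENNReal.ofReal_toReal hD]

lemma muI_eq_restrict_Ipos : muI α = volume.restrict (Ipos α) := by
  refine Measure.restrict_congr_set ?_
  have : {s : ℝ | 0 ≤ s ∧ ENNReal.ofReal s < α} = Ici 0 ∩ ENNReal.ofReal ⁻¹' Iio α := rfl
  rw [this, Ipos, show {s : ℝ | 0 < s ∧ ENNReal.ofReal s < α} = Ioi 0 ∩ ENNReal.ofReal ⁻¹' Iio α
    from rfl]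
  exact Ioi_ae_eq_Ici.symm.inter (ae_eq_refl _)

lemma muI_apply (T : Set ℝ) : muI α T = volume (T ∩ Ipos α) := by
  rw [muI_eq_restrict_Ipos, Measure.restrict_apply' (measurableSet_Ipos α)]

lemma muI_univ : muI α univ = α := by
  rw [muI_apply, univ_inter, volume_Ipos]

lemma ae_muI_of_ae_pos {P : ℝ → Prop} (h : ∀ᵐ s ∂volume, 0 < s → P s) :
    ∀ᵐ s ∂muI α, P s := by
  rw [muI_eq_restrict_Ipos, ae_restrict_iff' (measurableSet_Ipos α)]
  exact h.mono fun s hs hI => hs hI.1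

lemma ae_muI_of_pos {P : ℝ → Prop} (h : ∀ s, 0 < s → P s) : ∀ᵐ s ∂muI α, P s :=
  ae_muI_of_ae_pos (Eventually.of_forall h)

lemma aemeasurable_muI_of_antitoneOn {f : ℝ → ℝ} (hf : AntitoneOn f (Ioi 0)) :
    AEMeasurable f (muI α) := by
  rw [muI_eq_restrict_Ipos]
  exact aemeasurable_restrict_of_antitoneOn (measurableSet_Ipos α)
    (hf.mono fun _ hs => hs.1)

variable {x y z : ℝ → ℝ}

lemma distr_le (y : ℝ → ℝ) (lam : ℝ) : distr α y lam ≤ α :=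
  (measure_mono (subset_univ _)).trans_eq muI_univ

lemma distr_antitone (y : ℝ → ℝ) : Antitone (distr α y) :=
  fun _ _ hab => measure_mono fun _ hs => lt_of_le_of_lt hab hs

lemma distr_congr_ae (h : y =ᵐ[muI α] z) : distr α y = distr α z := by
  funext lam
  refine measure_congr ?_
  filter_upwards [h] with s hs
  change (lam < |y s|) = (lam < |z s|)
  rw [hs]

lemma distr_mono (h : ∀ᵐ s ∂muI α, |y s| ≤ |z s|) (lam : ℝ) :
    distr α y lam ≤ distr α z lam := by
  refine measure_mono_ae ?_
  filter_upwards [h] with s hs hlt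
  exact lt_of_lt_of_le hlt hs

lemma distr_of_neg (y : ℝ → ℝ) {lam : ℝ} (h : lam < 0) : distr α y lam = α :=
  (congrArg (muI α) (eq_univ_of_forall fun s => lt_of_lt_of_le h (abs_nonneg (y s)))).trans
    muI_univ

lemma distr_eq_iSup (y : ℝ → ℝ) (lam : ℝ) :
    distr α y lam = ⨆ n : ℕ, distr α y (lam + 1 / (n + 1)) := by
  have hmono : Monotone fun n : ℕ => {s : ℝ | lam + 1 / (n + 1) < |y s|} := by
    intro m n hmn s (hs : lam + 1 / ((m : ℝ) + 1) < |y s|)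
    refine lt_of_le_of_lt ?_ hs
    gcongr
  simp only [distr]
  rw [← hmono.measure_iUnion]
  congr 1
  ext s
  simp only [mem_iUnion]
  constructor
  · intro (hs : lam < |y s|)
    obtain ⟨n, hn⟩ := exists_nat_one_div_lt (sub_pos.2 hs)
    exact ⟨n, show lam + 1 / ((n : ℝ) + 1) < |y s| by linarith⟩
  · rintro ⟨n, hn : lam + 1 / ((n : ℝ) + 1) < |y s|⟩
    have : (0 : ℝ) < 1 / ((n : ℝ) + 1) := Nat.one_div_pos_of_nat
    exact show lam < |y s| by linarith

lemma distr_le_of_forall_lt {c : ℝ≥0∞} {lam : ℝ}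
    (h : ∀ lam', lam < lam' → distr α y lam' ≤ c) : distr α y lam ≤ c := by
  rw [distr_eq_iSup]
  exact iSup_le fun n => h _ (by linarith [Nat.one_div_pos_of_nat (α := ℝ) (n := n)])

lemma distr_smul {c : ℝ} (hc : 0 < c) (y : ℝ → ℝ) (lam : ℝ) :
    distr α (c • y) lam = distr α y (lam / c) := by
  simp only [distr, Pi.smul_apply, smul_eq_mul, abs_mul, abs_of_pos hc]
  congr 1
  ext s
  exact (div_lt_iff₀' hc).symm

lemma distr_abs (y : ℝ → ℝ) : distr α (fun s => |y s|) = distr α y := by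
  funext lam
  simp only [distr, abs_abs]

lemma distr_indicator_one (B : Set ℝ) (lam : ℝ) :
    distr α (B.indicator 1) lam = if lam < 0 then α else if lam < 1 then muI α B else 0 := by
  split_ifs with h0 h1
  · exact distr_of_neg _ h0
  · refine congrArg (muI α) (ext fun s => ?_)
    by_cases hs : s ∈ B <;> simp [hs, h1]
    linarith
  · refine (congrArg (muI α) (eq_empty_of_forall_notMem fun s => ?_)).trans measure_empty
    by_cases hs : s ∈ B <;> simp [hs] <;> linarith

lemma tendsto_distr_atTop {lam₀ : ℝ} (hy : AEMeasurable y (muI α))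
    (hfin : distr α y lam₀ ≠ ∞) : Tendsto (distr α y) atTop (𝓝 0) := by
  have hanti : Antitone fun lam : ℝ => {s : ℝ | lam < |y s|} :=
    fun _ _ hab _ hs => lt_of_le_of_lt hab hs
  have hempty : (⋂ lam : ℝ, {s : ℝ | lam < |y s|}) = ∅ :=
    eq_empty_of_forall_notMem fun s hs => lt_irrefl (|y s|) (mem_iInter.1 hs |y s|)
  have := tendsto_measure_iInter_atTop (μ := muI α)
    (fun lam => nullMeasurableSet_lt aemeasurable_const hy.abs) hanti ⟨lam₀, hfin⟩
  rwa [hempty, measure_empty] at this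

lemma rearr_nonneg (y : ℝ → ℝ) (t : ℝ) : 0 ≤ rearr α y t :=
  Real.sInf_nonneg fun _ hl => hl.1.le

lemma rearr_le_of_distr_le {lam t : ℝ} (hlam : 0 < lam) (h : distr α y lam ≤ ENNReal.ofReal t) :
    rearr α y t ≤ lam :=
  csInf_le ⟨0, fun _ hl => hl.1.le⟩ ⟨hlam, h⟩

lemma rearr_congr (h : distr α y = distr α z) : rearr α y = rearr α z := by
  funext t
  simp only [rearr, h]

/-- The hypothesis `Tendsto (distr α y) atTop (𝓝 0)` carried by most lemmas below makes the
infimum defining `rearr α y t` range over a nonempty set; otherwise it is the junk `sInf ∅ = 0`. -/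
lemma exists_distr_le (hy : Tendsto (distr α y) atTop (𝓝 0)) {t : ℝ} (ht : 0 < t) :
    ∃ lam, 0 < lam ∧ distr α y lam ≤ ENNReal.ofReal t :=
  ((hy.eventually (gt_mem_nhds (ENNReal.ofReal_pos.2 ht))).and (eventually_gt_atTop 0)).exists.imp
    fun _ h => ⟨h.2, h.1.le⟩

lemma rearr_le_iff (hy : Tendsto (distr α y) atTop (𝓝 0)) {t lam : ℝ} (ht : 0 < t)
    (hlam : 0 < lam) : rearr α y t ≤ lam ↔ distr α y lam ≤ ENNReal.ofReal t := by
  refine ⟨fun h => distr_le_of_forall_lt fun lam' hlam' => ?_, rearr_le_of_distr_le hlam⟩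
  obtain ⟨l, hl, hll⟩ := exists_lt_of_csInf_lt (exists_distr_le hy ht) (h.trans_lt hlam')
  exact (distr_antitone y hll.le).trans hl.2

lemma lt_rearr_iff (hy : Tendsto (distr α y) atTop (𝓝 0)) {t lam : ℝ} (ht : 0 < t)
    (hlam : 0 < lam) : lam < rearr α y t ↔ ENNReal.ofReal t < distr α y lam := by
  rw [← not_le, ← not_le, rearr_le_iff hy ht hlam]

lemma rearr_antitoneOn (hy : Tendsto (distr α y) atTop (𝓝 0)) :
    AntitoneOn (rearr α y) (Ioi 0) := fun _ ht _ _ htt' =>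
  csInf_le_csInf ⟨0, fun _ hl => hl.1.le⟩ (exists_distr_le hy ht)
    fun _ hl => ⟨hl.1, hl.2.trans (ENNReal.ofReal_le_ofReal htt')⟩

lemma rearr_mono (h : ∀ᵐ s ∂muI α, |y s| ≤ |z s|) (hz : Tendsto (distr α z) atTop (𝓝 0))
    {t : ℝ} (ht : 0 < t) : rearr α y t ≤ rearr α z t :=
  csInf_le_csInf ⟨0, fun _ hl => hl.1.le⟩ (exists_distr_le hz ht)
    fun l hl => ⟨hl.1, (distr_mono h l).trans hl.2⟩

open scoped Pointwise in
lemma rearr_smul {c : ℝ} (hc : 0 < c) (y : ℝ → ℝ) (t : ℝ) :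
    rearr α (c • y) t = c * rearr α y t := by
  have hset : {lam : ℝ | 0 < lam ∧ distr α (c • y) lam ≤ ENNReal.ofReal t} =
      c • {lam : ℝ | 0 < lam ∧ distr α y lam ≤ ENNReal.ofReal t} := by
    ext l
    rw [mem_smul_set_iff_inv_smul_mem₀ hc.ne', smul_eq_mul, inv_mul_eq_div]
    simp only [mem_ofPred_eq, distr_smul hc, div_pos_iff_of_pos_right hc]
  rw [rearr, hset, Real.sInf_smul_of_nonneg hc.le, smul_eq_mul, rearr]

lemma rearr_eq_zero_of_le {t : ℝ} (h : α ≤ ENNReal.ofReal t) (y : ℝ → ℝ) : rearr α y t = 0 := by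
  have : {lam : ℝ | 0 < lam ∧ distr α y lam ≤ ENNReal.ofReal t} = Ioi 0 :=
    ext fun l => ⟨fun hl => hl.1, fun hl => ⟨hl, (distr_le y l).trans h⟩⟩
  rw [rearr, this, csInf_Ioi]

lemma tendsto_rearr_atTop (h : rearrInftyZero α y) : Tendsto (rearr α y) atTop (𝓝 0) := by
  rcases eq_or_ne α ∞ with hα | hα
  · exact h hα
  refine tendsto_const_nhds.congr' ?_
  filter_upwards [eventually_ge_atTop α.toReal] with t ht
  exact (rearr_eq_zero_of_le ((ENNReal.le_ofReal_iff_toReal_le hα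
    (ENNReal.toReal_nonneg.trans ht)).2 ht) y).symm

lemma aemeasurable_rearr (hy : Tendsto (distr α y) atTop (𝓝 0)) :
    AEMeasurable (rearr α y) (muI α) :=
  aemeasurable_muI_of_antitoneOn (rearr_antitoneOn hy)

lemma aestronglyMeasurable_rearr (hy : Tendsto (distr α y) atTop (𝓝 0)) {S : Set ℝ}
    (hS : MeasurableSet S) (hS0 : S ⊆ Ioi 0) :
    AEStronglyMeasurable (rearr α y) (volume.restrict S) :=
  (aemeasurable_restrict_of_antitoneOn hS ((rearr_antitoneOn hy).mono hS0)).aestronglyMeasurable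

/-- For `lam > 0` both sides are the measure of `(0, d_y(lam))`; the case `lam = 0` follows by
right continuity of distribution functions. -/
lemma distr_rearr (hy : Tendsto (distr α y) atTop (𝓝 0)) : distr α (rearr α y) = distr α y := by
  have hpos : ∀ lam : ℝ, 0 < lam → distr α (rearr α y) lam = distr α y lam := by
    intro lam hlam
    have : {s | lam < |rearr α y s|} ∩ Ipos α = Ipos (distr α y lam) := by
      ext s
      simp only [Ipos, mem_inter_iff, mem_ofPred_eq, abs_of_nonneg (rearr_nonneg y s)]
      constructor
      · rintro ⟨h, hs, -⟩
        exact ⟨hs, (lt_rearr_iff hy hs hlam).1 h⟩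
      · rintro ⟨hs, h⟩
        exact ⟨(lt_rearr_iff hy hs hlam).2 h, hs, h.trans_le (distr_le y lam)⟩
    rw [distr, muI_apply, this, volume_Ipos]
  funext lam
  rcases lt_trichotomy lam 0 with hlam | rfl | hlam
  · rw [distr_of_neg _ hlam, distr_of_neg _ hlam]
  · rw [distr_eq_iSup, distr_eq_iSup y]
    exact iSup_congr fun n => hpos _ (by positivity)
  · exact hpos lam hlam

lemma tendsto_distr_rearr (hy : Tendsto (distr α y) atTop (𝓝 0)) :
    Tendsto (distr α (rearr α y)) atTop (𝓝 0) := by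
  rwa [distr_rearr hy]

lemma rearr_rearr (hy : Tendsto (distr α y) atTop (𝓝 0)) : rearr α (rearr α y) = rearr α y :=
  rearr_congr (distr_rearr hy)

lemma abs_posPart_rearr_sub_le {b : ℝ → ℝ} (hb0 : ∀ s, 0 ≤ b s) (s : ℝ) :
    |(rearr α y - b)⁺ s| ≤ rearr α y s := by
  rw [Pi.posPart_apply, abs_of_nonneg (posPart_nonneg _)]
  exact (posPart_mono (sub_le_self _ (hb0 s))).trans_eq (posPart_eq_self.2 (rearr_nonneg y s))

lemma rearr_eq_of_antitoneOn {v : ℝ → ℝ} (hanti : AntitoneOn v (Ioi 0)) (hv0 : ∀ t, 0 ≤ v t)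
    (hright : ∀ t lam, lam < v t → ∃ t' > t, lam < v t')
    (hsupp : ∀ t, 0 < t → α ≤ ENNReal.ofReal t → v t = 0) {t : ℝ} (ht : 0 < t) :
    rearr α v t = v t := by
  have hdistr : ∀ ε > 0, distr α v (v t + ε) ≤ ENNReal.ofReal t := by
    intro ε hε
    rw [distr, muI_apply, show ENNReal.ofReal t = volume (Ioo 0 t) by simp]
    refine measure_mono fun s ⟨hs, hs0, _⟩ => ⟨hs0, lt_of_not_ge fun hts => ?_⟩
    have : v t + ε < v s := by rwa [mem_ofPred_eq, abs_of_nonneg (hv0 s)] at hs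
    linarith [hanti ht hs0 hts]
  refine le_antisymm (le_of_forall_pos_le_add fun ε hε =>
    rearr_le_of_distr_le (by linarith [hv0 t]) (hdistr ε hε)) ?_
  refine le_csInf ⟨v t + 1, by linarith [hv0 t], hdistr 1 one_pos⟩ fun l ⟨hl0, hl⟩ => ?_
  by_contra! hlt
  obtain ⟨t', htt', hlt'⟩ := hright t l hlt
  have hα : ENNReal.ofReal t' < α := lt_of_not_ge fun h => by linarith [hsupp t' (ht.trans htt') h]
  have : ENNReal.ofReal t' ≤ ENNReal.ofReal t := by
    refine le_trans ?_ hl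
    rw [distr, muI_apply, show ENNReal.ofReal t' = volume (Ioc 0 t') by simp]
    refine measure_mono fun s ⟨hs0, hst'⟩ => ⟨?_, hs0, ?_⟩
    · rw [mem_ofPred_eq, abs_of_nonneg (hv0 s)]
      exact hlt'.trans_le (hanti hs0 (ht.trans htt') hst')
    · exact (ENNReal.ofReal_le_ofReal hst').trans_lt hα
  linarith [(ENNReal.ofReal_le_ofReal_iff ht.le).1 this]

lemma maxf_nonneg (y : ℝ → ℝ) (t : ℝ) : 0 ≤ maxf α y t := by
  rcases le_or_gt t 0 with ht | ht
  · rw [maxf, Ioc_eq_empty (not_lt.2 ht), Measure.restrict_empty, integral_zero_measure,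
      zero_div]
  · exact div_nonneg (setIntegral_nonneg measurableSet_Ioc fun s _ => rearr_nonneg y s) ht.le

lemma integrableOn_rearr_of_integrableOn (hy : Tendsto (distr α y) atTop (𝓝 0)) {s : ℝ}
    (hs : 0 < s) (h : IntegrableOn (rearr α y) (Ioc 0 s)) (t : ℝ) :
    IntegrableOn (rearr α y) (Ioc 0 t) := by
  have htail : IntegrableOn (rearr α y) (Ioc s t) := by
    refine Integrable.mono' (g := fun _ => rearr α y s) (integrableOn_const (by simp))
      (aestronglyMeasurable_rearr hy measurableSet_Ioc fun u hu => hs.trans hu.1) ?_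
    filter_upwards [ae_restrict_mem measurableSet_Ioc] with u hu
    rw [Real.norm_of_nonneg (rearr_nonneg y u)]
    exact rearr_antitoneOn hy hs (hs.trans hu.1) hu.1.le
  exact (h.union htail).mono_set Ioc_subset_Ioc_union_Ioc

lemma rearr_le_maxf (hy : Tendsto (distr α y) atTop (𝓝 0)) {t : ℝ} (ht : 0 < t)
    (hint : IntegrableOn (rearr α y) (Ioc 0 t)) : rearr α y t ≤ maxf α y t := by
  rw [maxf, le_div_iff₀ ht]
  calc rearr α y t * t = ∫ _ in Ioc 0 t, rearr α y t := by
        rw [setIntegral_const, measureReal_def, Real.volume_Ioc, sub_zero,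
          ENNReal.toReal_ofReal ht.le, smul_eq_mul, mul_comm]
    _ ≤ ∫ s in Ioc 0 t, rearr α y s :=
        setIntegral_mono_on (integrableOn_const (by simp)) hint measurableSet_Ioc
          fun s hs => rearr_antitoneOn hy hs.1 ht hs.2

lemma hlp_of_abs_le_rearr {w : ℝ → ℝ} (hy : Tendsto (distr α y) atTop (𝓝 0))
    (hint : ∀ t, IntegrableOn (rearr α y) (Ioc 0 t)) (hw : ∀ s, 0 < s → |w s| ≤ rearr α y s) :
    HLP α w y := by
  intro t ht
  refine div_le_div_of_nonneg_right ?_ ht.le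
  refine integral_mono_of_nonneg (Eventually.of_forall fun s => rearr_nonneg w s) (hint t) ?_
  filter_upwards [ae_restrict_mem measurableSet_Ioc] with s hs
  have hle : ∀ᵐ u ∂muI α, |w u| ≤ |rearr α y u| := ae_muI_of_pos fun u hu =>
    (hw u hu).trans (le_abs_self _)
  simpa only [rearr_rearr hy] using rearr_mono hle (tendsto_distr_rearr hy) hs.1

lemma tendsto_maxf_atTop (hint : ∀ t, IntegrableOn (rearr α y) (Ioc 0 t))
    (h : Tendsto (rearr α y) atTop (𝓝 0)) : Tendsto (maxf α y) atTop (𝓝 0) := by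
  refine tendsto_order.2 ⟨fun a ha => Eventually.of_forall fun t => ha.trans_le
    (maxf_nonneg y t), fun ε hε => ?_⟩
  obtain ⟨T, hT⟩ := eventually_atTop.1 (h.eventually (gt_mem_nhds (half_pos hε)))
  set T' := max T 1
  have hT' : 0 < T' := lt_of_lt_of_le one_pos (le_max_right _ _)
  set C := ∫ s in Ioc 0 T', rearr α y s
  filter_upwards [eventually_gt_atTop (max T' (2 * C / ε))] with t ht
  have htT : T' < t := (le_max_left _ _).trans_lt ht
  have ht0 : 0 < t := hT'.trans htT
  have htail : ∫ s in Ioc T' t, rearr α y s ≤ ∫ _ in Ioc T' t, ε / 2 :=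
    setIntegral_mono_on (hint t |>.mono_set (Ioc_subset_Ioc_left hT'.le))
      (integrableOn_const (by simp)) measurableSet_Ioc
      fun s hs => (hT s ((le_max_left _ _).trans hs.1.le)).le
  rw [setIntegral_const, measureReal_def, Real.volume_Ioc, ENNReal.toReal_ofReal (by linarith),
    smul_eq_mul] at htail
  have hsplit : ∫ s in Ioc 0 t, rearr α y s = C + ∫ s in Ioc T' t, rearr α y s := by
    rw [← setIntegral_union (Ioc_disjoint_Ioc_of_le le_rfl) measurableSet_Ioc (hint T')
      (hint t |>.mono_set (Ioc_subset_Ioc_left hT'.le)), Ioc_union_Ioc_eq_Ioc hT'.le htT.le]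
  have hC : 2 * C / ε < t := (le_max_right _ _).trans_lt ht
  rw [div_lt_iff₀ hε] at hC
  rw [maxf, div_lt_iff₀ ht0, hsplit]
  nlinarith

lemma integral_le_of_tendsto_ae {μ : Measure ℝ} {f : ℕ → ℝ → ℝ} {v : ℝ → ℝ} {C : ℝ}
    (hf : ∀ k, Integrable (f k) μ) (hf0 : ∀ k, 0 ≤ᵐ[μ] f k)
    (hlim : ∀ᵐ s ∂μ, Tendsto (fun k => f k s) atTop (𝓝 (v s))) (hC : ∀ k, ∫ s, f k s ∂μ ≤ C) :
    ∫ s, v s ∂μ ≤ C := by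
  have hv0 : 0 ≤ᵐ[μ] v := by
    filter_upwards [hlim, ae_all_iff.2 hf0] with s hs hs0
    exact ge_of_tendsto' hs hs0
  have hlin : ∀ k, ∫⁻ s, ‖f k s‖ₑ ∂μ ≤ ENNReal.ofReal C := fun k => by
    rw [← ofReal_integral_norm_eq_lintegral_enorm (hf k)]
    refine ENNReal.ofReal_le_ofReal ((integral_congr_ae ?_).trans_le (hC k))
    filter_upwards [hf0 k] with s hs using Real.norm_of_nonneg hs
  have hv := (lintegral_enorm_le_liminf_of_tendsto hlim fun k => (hf k).1.aemeasurable.enorm).trans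
    (liminf_le_of_frequently_le' (Frequently.of_forall hlin))
  rw [integral_eq_lintegral_of_nonneg_ae hv0 (aestronglyMeasurable_of_tendsto_ae _
    (fun k => (hf k).1) hlim)]
  have hC0 : 0 ≤ C := (integral_nonneg_of_ae (hf0 0)).trans (hC 0)
  refine ENNReal.toReal_le_of_le_ofReal hC0 ((lintegral_congr_ae ?_).trans_le hv)
  filter_upwards [hv0] with s hs using (Real.enorm_of_nonneg hs).symm

lemma hlp_of_tendsto_ae {u : ℕ → ℝ → ℝ} {v x : ℝ → ℝ}
    (hint : ∀ k t, IntegrableOn (rearr α (u k)) (Ioc 0 t)) (hux : ∀ k, HLP α (u k) x)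
    (hlim : ∀ᵐ s, 0 < s → Tendsto (fun k => rearr α (u k) s) atTop (𝓝 (v s)))
    (hv : ∀ t, 0 < t → rearr α v t = v t) : HLP α v x := by
  intro t ht
  rw [maxf, setIntegral_congr_fun measurableSet_Ioc fun s hs => hv s hs.1, div_le_iff₀ ht]
  refine integral_le_of_tendsto_ae (fun k => hint k t)
    (fun k => Eventually.of_forall fun s => rearr_nonneg _ s)
    ((ae_restrict_iff' measurableSet_Ioc).2 (hlim.mono fun s hs hs' => hs hs'.1))
    fun k => (div_le_iff₀ ht).1 (hux k t ht)

section Convergence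

variable {w : ℕ → ℝ → ℝ} {g : ℝ → ℝ}

lemma tendsto_distr_of_tendsto_ae (hw : ∀ k, AEMeasurable (w k) (muI α))
    (hg : Tendsto g atTop (𝓝 0)) (hwg : ∀ k s, 0 < s → |w k s| ≤ g s)
    (hlim : ∀ᵐ s ∂muI α, Tendsto (fun k => w k s) atTop (𝓝 0)) {ε : ℝ} (hε : 0 < ε) :
    Tendsto (fun k => distr α (w k) ε) atTop (𝓝 0) := by
  obtain ⟨T, hT⟩ := eventually_atTop.1 (hg.eventually (gt_mem_nhds hε))
  set μT := (muI α).restrict (Iic T)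
  have : IsFiniteMeasure μT := isFiniteMeasure_restrict.2 <| by
    rw [muI_apply]
    exact ne_top_of_le_ne_top (by simp : volume (Ioc 0 T) ≠ ∞)
      (measure_mono fun s hs => ⟨hs.2.1, hs.1⟩)
  have hμT := tendstoInMeasure_of_tendsto_ae (μ := μT) (g := fun _ => 0)
    (fun k => (hw k).restrict.aestronglyMeasurable) (ae_restrict_of_ae hlim)
    (ENNReal.ofReal ε) (ENNReal.ofReal_pos.2 hε)
  refine tendsto_of_tendsto_of_tendsto_of_le_of_le tendsto_const_nhds hμT (fun _ => zero_le ..)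
    fun k => ?_
  refine (measure_mono_ae ?_).trans (Measure.le_restrict_apply _ _)
  filter_upwards [ae_muI_of_pos (α := α) fun s hs => hs] with s hs0 hs
  refine ⟨?_, ?_⟩
  · simp only [edist_zero_right, mem_ofPred_eq]
    rw [Real.enorm_eq_ofReal_abs]
    exact ENNReal.ofReal_le_ofReal (le_of_lt hs)
  · by_contra hTs
    exact absurd hs (not_lt.2 ((hwg k s hs0).trans (hT s (not_le.1 hTs).le).le))

lemma tendsto_rearr_of_tendsto_ae (hw : ∀ k, AEMeasurable (w k) (muI α))
    (hg : Tendsto g atTop (𝓝 0)) (hwg : ∀ k s, 0 < s → |w k s| ≤ g s)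
    (hlim : ∀ᵐ s ∂muI α, Tendsto (fun k => w k s) atTop (𝓝 0)) {s : ℝ} (hs : 0 < s) :
    Tendsto (fun k => rearr α (w k) s) atTop (𝓝 0) := by
  refine tendsto_order.2 ⟨fun a ha => Eventually.of_forall fun k => ha.trans_le
    (rearr_nonneg _ s), fun ε hε => ?_⟩
  filter_upwards [(tendsto_distr_of_tendsto_ae hw hg hwg hlim (half_pos hε)).eventually
    (gt_mem_nhds (ENNReal.ofReal_pos.2 hs))] with k hk
  exact (rearr_le_of_distr_le (half_pos hε) hk.le).trans_lt (half_lt_self hε)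

end Convergence

section Helly

variable {v₀ : {q : ℚ // 0 < q} → ℝ} {t : ℝ}

def ratRightLim (v₀ : {q : ℚ // 0 < q} → ℝ) (t : ℝ) : ℝ :=
  sSup (v₀ '' {q | t < q})

lemma posRat_cast_pos (q : {q : ℚ // 0 < q}) : (0 : ℝ) < q := Rat.cast_pos.2 q.2

lemma exists_pos_rat_btwn {a b : ℝ} (ha : 0 ≤ a) (hab : a < b) :
    ∃ q : {q : ℚ // 0 < q}, a < q ∧ (q : ℝ) < b :=
  let ⟨q, haq, hqb⟩ := exists_rat_btwn hab
  ⟨⟨q, Rat.cast_pos.1 (ha.trans_lt haq)⟩, haq, hqb⟩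

lemma nonempty_image_ratRightLim (v₀ : {q : ℚ // 0 < q} → ℝ) (t : ℝ) :
    (v₀ '' {q | t < q}).Nonempty :=
  let ⟨q, hq, _⟩ := exists_pos_rat_btwn (le_max_right t 0) (lt_add_one _)
  ⟨v₀ q, q, (le_max_left t 0).trans_lt hq, rfl⟩

lemma bddAbove_image_ratRightLim (hv₀ : Antitone v₀) (ht : 0 < t) :
    BddAbove (v₀ '' {q | t < q}) := by
  obtain ⟨q₀, -, hq₀⟩ := exists_pos_rat_btwn le_rfl ht
  exact ⟨v₀ q₀, by
    rintro _ ⟨q, hq, rfl⟩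
    exact hv₀ (show (q₀ : ℚ) ≤ q from Rat.cast_le.1 (hq₀.trans (show t < q from hq)).le)⟩

lemma le_ratRightLim (hv₀ : Antitone v₀) (ht : 0 < t) {q : {q : ℚ // 0 < q}} (hq : t < q) :
    v₀ q ≤ ratRightLim v₀ t :=
  le_csSup (bddAbove_image_ratRightLim hv₀ ht) ⟨q, hq, rfl⟩

lemma ratRightLim_le (hv₀ : Antitone v₀) {q : {q : ℚ // 0 < q}} (hq : (q : ℝ) ≤ t) :
    ratRightLim v₀ t ≤ v₀ q :=
  csSup_le (nonempty_image_ratRightLim v₀ t) <| by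
    rintro _ ⟨r, hr, rfl⟩
    exact hv₀ (show (q : ℚ) ≤ r from Rat.cast_le.1 (hq.trans (show t < r from hr).le))

lemma ratRightLim_nonneg (hv₀0 : ∀ q, 0 ≤ v₀ q) (t : ℝ) : 0 ≤ ratRightLim v₀ t :=
  Real.sSup_nonneg <| by
    rintro _ ⟨q, -, rfl⟩
    exact hv₀0 q

lemma antitoneOn_ratRightLim (hv₀ : Antitone v₀) : AntitoneOn (ratRightLim v₀) (Ioi 0) :=
  fun _ ht _ _ htt' => csSup_le_csSup (bddAbove_image_ratRightLim hv₀ ht)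
    (nonempty_image_ratRightLim v₀ _) (image_mono fun _ hq => htt'.trans_lt hq)

lemma exists_lt_ratRightLim (hv₀ : Antitone v₀) {lam : ℝ} (hlam : lam < ratRightLim v₀ t) :
    ∃ t' > t, lam < ratRightLim v₀ t' := by
  obtain ⟨_, ⟨q, hq, rfl⟩, hlt⟩ := exists_lt_of_lt_csSup (nonempty_image_ratRightLim v₀ t) hlam
  have hq : max t 0 < q := max_lt hq (posRat_cast_pos q)
  refine ⟨(max t 0 + q) / 2, by linarith [le_max_left t 0],
    hlt.trans_le (le_ratRightLim hv₀ ?_ (by linarith))⟩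
  linarith [le_max_right t 0]

lemma tendsto_ratRightLim {f : ℕ → ℝ → ℝ} (hf : ∀ n, AntitoneOn (f n) (Ioi 0))
    (hv₀ : Antitone v₀) (hlim : ∀ q : {q : ℚ // 0 < q}, Tendsto (fun k => f k q) atTop (𝓝 (v₀ q)))
    (ht : 0 < t) (hcont : ContinuousAt (ratRightLim v₀) t) :
    Tendsto (fun k => f k t) atTop (𝓝 (ratRightLim v₀ t)) := by
  refine tendsto_order.2 ⟨fun b hb => ?_, fun b hb => ?_⟩
  · obtain ⟨l, u, ⟨hlt, htu⟩, hsub⟩ := (hcont.eventually (lt_mem_nhds hb)).exists_Ioo_subset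
    obtain ⟨q, htq, hqu⟩ := exists_pos_rat_btwn ht.le htu
    have hbq : b < v₀ q := (hsub ⟨hlt.trans htq, hqu⟩ : b < _).trans_le (ratRightLim_le hv₀ le_rfl)
    filter_upwards [(hlim q).eventually (lt_mem_nhds hbq)] with k hk
    exact hk.trans_le (hf k ht (ht.trans htq) htq.le)
  · obtain ⟨l, u, ⟨hlt, htu⟩, hsub⟩ := (hcont.eventually (gt_mem_nhds hb)).exists_Ioo_subset
    obtain ⟨q₁, hq₁l, hq₁t⟩ := exists_pos_rat_btwn (le_max_right l 0) (max_lt hlt ht)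
    obtain ⟨q₂, hq₁₂, hq₂t⟩ := exists_pos_rat_btwn (posRat_cast_pos q₁).le hq₁t
    have hbq : v₀ q₂ < b := (le_ratRightLim hv₀ (posRat_cast_pos q₁) hq₁₂).trans_lt
      (hsub ⟨(le_max_left l 0).trans_lt hq₁l, hq₁t.trans htu⟩)
    filter_upwards [(hlim q₂).eventually (gt_mem_nhds hbq)] with k hk
    exact (hf k (posRat_cast_pos q₂) ht hq₂t.le).trans_lt hk

lemma exists_subseq_tendsto_pos_rat {f : ℕ → ℝ → ℝ} {g : ℝ → ℝ}
    (hfg : ∀ n (q : {q : ℚ // 0 < q}), f n q ∈ Icc 0 (g q)) :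
    ∃ (φ : ℕ → ℕ) (v₀ : {q : ℚ // 0 < q} → ℝ), StrictMono φ ∧
      ∀ q : {q : ℚ // 0 < q}, Tendsto (fun k => f (φ k) q) atTop (𝓝 (v₀ q)) :=
  let ⟨v₀, _, φ, hφ, h⟩ :=
    (isCompact_univ_pi fun _ : {q : ℚ // 0 < q} => isCompact_Icc).tendsto_subseq
    (x := fun n (q : {q : ℚ // 0 < q}) => f n q) fun n => mem_univ_pi.2 (hfg n)
  ⟨φ, v₀, hφ, tendsto_pi_nhds.1 h⟩

/-- Helly's selection theorem, with a right-continuous limit. -/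
theorem exists_subseq_tendsto_ae_of_antitoneOn {f : ℕ → ℝ → ℝ} {g : ℝ → ℝ}
    (hf : ∀ n, AntitoneOn (f n) (Ioi 0)) (hf0 : ∀ n t, 0 ≤ f n t)
    (hfg : ∀ n t, 0 < t → f n t ≤ g t) :
    ∃ (φ : ℕ → ℕ) (v : ℝ → ℝ), StrictMono φ ∧ AntitoneOn v (Ioi 0) ∧ (∀ t, 0 ≤ v t) ∧
      (∀ t lam, lam < v t → ∃ t' > t, lam < v t') ∧
      (∀ t c, 0 < t → (∀ n, f n t ≤ c) → v t ≤ c) ∧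
      ∀ᵐ t, 0 < t → Tendsto (fun k => f (φ k) t) atTop (𝓝 (v t)) := by
  obtain ⟨φ, v₀, hφ, hlim⟩ := exists_subseq_tendsto_pos_rat (f := f) (g := g)
    fun n q => ⟨hf0 n q, hfg n q (posRat_cast_pos q)⟩
  have hv₀ : Antitone v₀ := fun q q' hqq' => le_of_tendsto_of_tendsto' (hlim q') (hlim q)
    fun k => hf _ (posRat_cast_pos q) (posRat_cast_pos q') (Rat.cast_le.2 hqq')
  have hv₀0 : ∀ q, 0 ≤ v₀ q := fun q => ge_of_tendsto' (hlim q) fun k => hf0 _ _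
  refine ⟨φ, ratRightLim v₀, hφ, antitoneOn_ratRightLim hv₀, ratRightLim_nonneg hv₀0,
    fun t lam => exists_lt_ratRightLim hv₀, fun t c ht hc => ?_, ?_⟩
  · refine csSup_le (nonempty_image_ratRightLim v₀ t) ?_
    rintro _ ⟨q, hq, rfl⟩
    exact le_of_tendsto' (hlim q) fun k => (hf _ ht (posRat_cast_pos q) (le_of_lt hq)).trans (hc _)
  · filter_upwards [(antitoneOn_ratRightLim hv₀).countable_not_continuousWithinAt.ae_notMem
      volume] with t ht ht0
    refine tendsto_ratRightLim (fun k => hf (φ k)) hv₀ hlim ht0 ?_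
    by_contra hcont
    exact ht ⟨ht0, fun h => hcont (h.continuousAt (Ioi_mem_nhds ht0))⟩

end Helly

end Rearrangement

open Rearrangement

namespace SymmetricBFS

variable (E : SymmetricBFS α) {x y z : ℝ → ℝ}

lemma mem_abs (hy : E.Mem y) : E.Mem fun s => |y s| :=
  (E.ideal (E.mem_aemeasurable hy).abs hy (Eventually.of_forall fun s => (abs_abs (y s)).le)).1

lemma norm_abs (hy : E.Mem y) : E.N (fun s => |y s|) = E.N y :=
  (E.symmetric (E.mem_aemeasurable hy).abs hy (distr_abs y)).2

lemma norm_le_add_of_abs_le {f : ℝ → ℝ} (hf : AEMeasurable f (muI α)) (hy : E.Mem y)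
    (hz : E.Mem z) (h : ∀ᵐ s ∂muI α, |f s| ≤ |y s| + |z s|) : E.N f ≤ E.N y + E.N z := by
  have hyz : E.Mem ((fun s => |y s|) + fun s => |z s|) := E.add_mem (E.mem_abs hy) (E.mem_abs hz)
  calc E.N f ≤ E.N ((fun s => |y s|) + fun s => |z s|) :=
        (E.ideal hf hyz (h.mono fun s hs => hs.trans (le_abs_self _))).2
    _ ≤ E.N y + E.N z := by
        rw [← E.norm_abs hy, ← E.norm_abs hz]
        exact E.norm_add_le _ _

/-- If `d_y ≡ ∞` on `(0, ∞)`, the indicators of `{|y| > n + 1}` are all equimeasurable, so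
`(n + 1) ‖χ_{|y| > 1}‖ ≤ ‖y‖` for every `n`. -/
lemma exists_distr_ne_top (hy : E.Mem y) : ∃ lam, distr α y lam ≠ ∞ := by
  by_contra! htop
  have hmeas := E.mem_aemeasurable hy
  set B : ℕ → Set ℝ := fun n => {s | (n : ℝ) + 1 < |hmeas.mk y s|}
  have hB : ∀ n, muI α (B n) = ∞ := fun n => by
    rw [← htop ((n : ℝ) + 1), distr_congr_ae hmeas.ae_eq_mk]; rfl
  have hχ : ∀ n, Measurable ((B n).indicator (1 : ℝ → ℝ)) := fun n =>
    measurable_const.indicator (measurableSet_lt measurable_const hmeas.measurable_mk.abs)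
  have hle : ∀ n : ℕ, ∀ᵐ s ∂muI α, |((n : ℝ) + 1) • (B n).indicator 1 s| ≤ |y s| := by
    intro n
    filter_upwards [hmeas.ae_eq_mk] with s hs
    by_cases hsB : s ∈ B n
    · have : (n : ℝ) + 1 < |y s| := hs ▸ hsB
      simp only [smul_eq_mul, indicator_of_mem hsB, Pi.one_apply, mul_one]
      rw [abs_of_pos (by positivity)]
      exact this.le
    · simp [indicator_of_notMem hsB]
  have hmem0 : E.Mem ((B 0).indicator 1) :=
    (E.ideal (hχ 0).aemeasurable hy (by simpa using hle 0)).1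
  have hnorm : ∀ n : ℕ, ((n : ℝ) + 1) * E.N ((B 0).indicator 1) ≤ E.N y := by
    intro n
    have heq := (E.symmetric (hχ n).aemeasurable hmem0 (funext fun lam => by
      simp only [distr_indicator_one, hB])).2
    have := (E.ideal ((hχ n).aemeasurable.const_smul ((n : ℝ) + 1)) hy (hle n)).2
    rwa [E.norm_smul', heq, abs_of_pos (by positivity)] at this
  have hzero : E.N ((B 0).indicator 1) = 0 := by
    refine le_antisymm (le_of_forall_pos_le_add fun ε hε => ?_) (E.norm_nonneg' _)
    obtain ⟨n, hn⟩ := exists_nat_gt (E.N y / ε)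
    have hn' : E.N y < n * ε := (div_lt_iff₀ hε).1 hn
    nlinarith [hnorm n, E.norm_nonneg' ((B 0).indicator 1)]
  have hnull := ae_iff.1 ((E.norm_eq_zero_iff hmem0).1 hzero)
  refine ENNReal.top_ne_zero ((hB 0).symm.trans (measure_mono_null (fun s hs => ?_) hnull))
  simp [hs]

lemma tendsto_distr (hy : E.Mem y) : Tendsto (distr α y) atTop (𝓝 0) :=
  let ⟨_, hlam⟩ := E.exists_distr_ne_top hy
  tendsto_distr_atTop (E.mem_aemeasurable hy) hlam

lemma mem_rearr (hy : E.Mem y) : E.Mem (rearr α y) :=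
  (E.symmetric (aemeasurable_rearr (E.tendsto_distr hy)) hy (distr_rearr (E.tendsto_distr hy))).1

lemma norm_rearr (hy : E.Mem y) : E.N (rearr α y) = E.N y :=
  (E.symmetric (aemeasurable_rearr (E.tendsto_distr hy)) hy (distr_rearr (E.tendsto_distr hy))).2

lemma mem_of_tendsto_ae {f : ℕ → ℝ → ℝ} {v : ℝ → ℝ} (hf : ∀ k, E.Mem (f k))
    (hf0 : ∀ k s, 0 ≤ f k s) (hlim : ∀ᵐ s ∂muI α, Tendsto (fun k => f k s) atTop (𝓝 (v s)))
    (hN : BddAbove (range fun k => E.N (f k))) : E.Mem v := by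
  set w : ℕ → ℝ → ℝ := fun m s => ⨅ k, f (m + k) s
  have hbdd : ∀ m s, BddBelow (range fun k => f (m + k) s) := fun m s =>
    ⟨0, by rintro _ ⟨k, rfl⟩; exact hf0 _ s⟩
  have hw0 : ∀ m s, 0 ≤ w m s := fun m s => le_ciInf fun k => hf0 _ s
  have hw : ∀ m, E.Mem (w m) ∧ E.N (w m) ≤ E.N (f m) := fun m =>
    E.ideal (AEMeasurable.iInf fun k => E.mem_aemeasurable (hf (m + k))) (hf m)
      (Eventually.of_forall fun s => by
        rw [abs_of_nonneg (hw0 m s), abs_of_nonneg (hf0 m s)]; exact ciInf_le (hbdd m s) 0)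
  have hmono : ∀ m s, w m s ≤ w (m + 1) s := fun m s =>
    le_ciInf fun k => (ciInf_le (hbdd m s) (k + 1)).trans_eq (by rw [add_assoc, add_comm 1 k])
  obtain ⟨B, hB⟩ := hN
  exact (E.fatou w v (fun m => (hw m).1)
    (aemeasurable_of_tendsto_metrizable_ae' (fun k => E.mem_aemeasurable (hf k)) hlim)
    (fun m => Eventually.of_forall (hw0 m)) (fun m => Eventually.of_forall (hmono m))
    (hlim.mono fun s hs => hs.iInf_tail)
    ⟨B, fun m => (hw m).2.trans (hB (mem_range_self m))⟩).1

lemma mem_sub {f g : ℝ → ℝ} (hf : E.Mem f) (hg : E.Mem g) : E.Mem (f - g) := by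
  simpa [sub_eq_add_neg] using E.add_mem hf (E.smul_mem (-1) hg)

lemma mem_posPart {f : ℝ → ℝ} (hf : E.Mem f) : E.Mem f⁺ :=
  (E.ideal (x := f⁺) ((E.mem_aemeasurable hf).sup aemeasurable_const) hf
    (Eventually.of_forall fun s => by
      rw [Pi.posPart_apply, abs_of_nonneg (posPart_nonneg _)]
      exact max_le (le_abs_self _) (abs_nonneg _))).1

lemma norm_sub_le_norm_posPart_add {f g : ℝ → ℝ} (hf : E.Mem f) (hg : E.Mem g) :
    E.N (f - g) ≤ E.N (f - g)⁺ + E.N (g - f)⁺ :=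
  E.norm_le_add_of_abs_le (E.mem_aemeasurable (E.mem_sub hf hg))
    (E.mem_posPart (E.mem_sub hf hg)) (E.mem_posPart (E.mem_sub hg hf))
    (Eventually.of_forall fun s => by
      simp only [Pi.posPart_apply, Pi.sub_apply]
      exact abs_sub_le_iff.2 ⟨(le_posPart _).trans (le_add_of_le_of_nonneg (le_abs_self _)
        (abs_nonneg _)), (le_posPart _).trans (le_add_of_nonneg_of_le (abs_nonneg _)
        (le_abs_self _))⟩)

lemma le_norm_of_tendsto_norm_posPart_sub {f : ℕ → ℝ → ℝ} {v : ℝ → ℝ} {c : ℝ}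
    (hf : ∀ k, E.Mem (f k)) (hf0 : ∀ k s, 0 ≤ f k s) (hv : E.Mem v)
    (hN : Tendsto (fun k => E.N (f k)) atTop (𝓝 c))
    (h : Tendsto (fun k => E.N (f k - v)⁺) atTop (𝓝 0)) : c ≤ E.N v := by
  refine le_of_tendsto_of_tendsto' hN (by simpa using h.add_const (E.N v)) fun k =>
    E.norm_le_add_of_abs_le (E.mem_aemeasurable (hf k)) (E.mem_posPart (E.mem_sub (hf k) hv)) hv
      (Eventually.of_forall fun s => ?_)
  rw [abs_of_nonneg (hf0 k s), Pi.posPart_apply]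
  linarith [le_posPart ((f k - v) s), le_abs_self ((f k - v) s)⁺, le_abs_self (v s),
    show (f k - v) s = f k s - v s from rfl]

variable {E}

lemma mem_of_abs_le_rearr {y w : ℝ → ℝ} (hy : E.Mem y) (hw : AEMeasurable w (muI α))
    (hwy : ∀ s, 0 < s → |w s| ≤ rearr α y s) : E.Mem w :=
  (E.ideal hw (E.mem_rearr hy) (ae_muI_of_pos fun s hs => (hwy s hs).trans (le_abs_self _))).1

/-- If `y*` were not integrable near `0`, then `w = |y| + |x|` and
`2w` would have `w** = (2w)** = 0 ≤ x**` (junk value of the integral) and norms `≥ ‖x‖`, so both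
would share the rearrangement `x*`, forcing `w* = 0`. -/
lemma IsLKMPoint.integrableOn_rearr (hLKM : E.IsLKMPoint x) (hx : E.Mem x) (hy : E.Mem y)
    (t : ℝ) : IntegrableOn (rearr α y) (Ioc 0 t) := by
  by_contra hni
  set w : ℝ → ℝ := fun s => |y s| + |x s|
  have hw : E.Mem w := E.add_mem (E.mem_abs hy) (E.mem_abs hx)
  have hwdistr := E.tendsto_distr hw
  have hwni : ∀ s, 0 < s → ¬ IntegrableOn (rearr α w) (Ioc 0 s) := by
    refine fun s hs hint => hni (integrableOn_rearr_of_integrableOn (E.tendsto_distr hy) hs ?_ t)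
    refine hint.mono' (aestronglyMeasurable_rearr (E.tendsto_distr hy) measurableSet_Ioc
      fun _ hu => hu.1) ?_
    filter_upwards [ae_restrict_mem measurableSet_Ioc] with u hu
    rw [Real.norm_of_nonneg (rearr_nonneg y u)]
    refine rearr_mono (Eventually.of_forall fun v => ?_) hwdistr hu.1
    simp only [w, abs_of_nonneg (add_nonneg (abs_nonneg (y v)) (abs_nonneg (x v)))]
    linarith [abs_nonneg (x v)]
  have hNw : E.N x ≤ E.N w := (E.ideal (E.mem_aemeasurable hx) hw (Eventually.of_forall fun v => by
    simp only [w, abs_of_nonneg (add_nonneg (abs_nonneg (y v)) (abs_nonneg (x v)))]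
    linarith [abs_nonneg (y v)])).2
  have key : ∀ c : ℝ, 1 ≤ c → rearr α (c • w) = rearr α x := by
    intro c hc
    by_contra hne
    have hHLP : HLP α (c • w) x := fun s hs => by
      rw [maxf, funext (rearr_smul (by linarith) w), integral_const_mul,
        integral_undef (hwni s hs), mul_zero, zero_div]
      exact maxf_nonneg x s
    have := hLKM _ (E.smul_mem c hw) hHLP hne
    rw [E.norm_smul', abs_of_nonneg (by linarith)] at this
    nlinarith [E.norm_nonneg' w]
  have hzero : ∀ s, 0 < s → rearr α w s = 0 := fun s _ => by
    have := congrFun ((key 2 one_le_two).trans (key 1 le_rfl).symm) s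
    rw [rearr_smul two_pos, rearr_smul one_pos] at this
    linarith
  refine hwni 1 one_pos ((integrableOn_zero).congr_fun (fun s hs => (hzero s hs.1).symm)
    measurableSet_Ioc)

lemma IsKOCPoint.tendsto_norm_of_abs_le_rearr (hKOC : E.IsKOCPoint x) (hx : E.Mem x)
    (hint : ∀ y, E.Mem y → ∀ t, IntegrableOn (rearr α y) (Ioc 0 t))
    (hxinf : Tendsto (rearr α x) atTop (𝓝 0)) {y w : ℕ → ℝ → ℝ} (hy : ∀ k, E.Mem (y k))
    (hyx : ∀ k, HLP α (y k) x) (hw : ∀ k, AEMeasurable (w k) (muI α))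
    (hwy : ∀ k s, 0 < s → |w k s| ≤ rearr α (y k) s)
    (hlim : ∀ᵐ s ∂muI α, Tendsto (fun k => w k s) atTop (𝓝 0)) :
    Tendsto (fun k => E.N (w k)) atTop (𝓝 0) := by
  have hwmem : ∀ k, E.Mem (w k) := fun k => mem_of_abs_le_rearr (hy k) (hw k) (hwy k)
  have hwx : ∀ k, HLP α (w k) x := fun k =>
    (hlp_of_abs_le_rearr (E.tendsto_distr (hy k)) (hint _ (hy k)) (hwy k)).trans (hyx k)
  have hwg : ∀ k s, 0 < s → |w k s| ≤ maxf α x s := fun k s hs => (hwy k s hs).trans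
    ((rearr_le_maxf (E.tendsto_distr (hy k)) hs (hint _ (hy k) s)).trans (hyx k s hs))
  exact hKOC w hwmem hwx (ae_muI_of_pos fun s hs =>
    tendsto_rearr_of_tendsto_ae hw (tendsto_maxf_atTop (hint x hx) hxinf) hwg hlim hs)

lemma IsKOCPoint.tendsto_norm_posPart_rearr_sub (hKOC : E.IsKOCPoint x) (hx : E.Mem x)
    (hint : ∀ y, E.Mem y → ∀ t, IntegrableOn (rearr α y) (Ioc 0 t))
    (hxinf : Tendsto (rearr α x) atTop (𝓝 0)) {y b : ℕ → ℝ → ℝ} (hy : ∀ k, E.Mem (y k))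
    (hyx : ∀ k, HLP α (y k) x) (hb : ∀ k, AEMeasurable (b k) (muI α)) (hb0 : ∀ k s, 0 ≤ b k s)
    (hlim : ∀ᵐ s ∂muI α, Tendsto (fun k => rearr α (y k) s - b k s) atTop (𝓝 0)) :
    Tendsto (fun k => E.N (rearr α (y k) - b k)⁺) atTop (𝓝 0) :=
  hKOC.tendsto_norm_of_abs_le_rearr hx hint hxinf hy hyx
    (fun k => ((aemeasurable_rearr (E.tendsto_distr (hy k))).sub (hb k)).sup aemeasurable_const)
    (fun k s _ => abs_posPart_rearr_sub_le (hb0 k) s)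
    (hlim.mono fun _ hs => posPart_zero (α := ℝ) ▸ hs.sup_nhds tendsto_const_nhds)

theorem IsKOCPoint.tendsto_norm_rearr_sub_of_tendsto_ae (hKOC : E.IsKOCPoint x)
    (hLKM : E.IsLKMPoint x) (hx : E.Mem x) (hinf : rearrInftyZero α x) {u : ℕ → ℝ → ℝ}
    (hu : ∀ k, E.Mem (u k)) (hux : ∀ k, HLP α (u k) x)
    (hN : Tendsto (fun k => E.N (u k)) atTop (𝓝 (E.N x)))
    {v : ℝ → ℝ} (hv_anti : AntitoneOn v (Ioi 0)) (hv0 : ∀ t, 0 ≤ v t)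
    (hright : ∀ t lam, lam < v t → ∃ t' > t, lam < v t')
    (hsupp : ∀ t, 0 < t → α ≤ ENNReal.ofReal t → v t = 0)
    (hlim : ∀ᵐ s, 0 < s → Tendsto (fun k => rearr α (u k) s) atTop (𝓝 (v s))) :
    Tendsto (fun k => E.N (rearr α (u k) - rearr α x)) atTop (𝓝 0) := by
  have hint : ∀ y, E.Mem y → ∀ t, IntegrableOn (rearr α y) (Ioc 0 t) :=
    fun y hy => hLKM.integrableOn_rearr hx hy
  have hxinf := tendsto_rearr_atTop hinf
  have hlim' := ae_muI_of_ae_pos (α := α) hlim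
  have hN' : Tendsto (fun k => E.N (rearr α (u k))) atTop (𝓝 (E.N x)) := by
    simpa only [E.norm_rearr (hu _)] using hN
  have hv : E.Mem v := E.mem_of_tendsto_ae (fun k => E.mem_rearr (hu k)) (fun k => rearr_nonneg _)
    hlim' hN'.bddAbove_range
  have hNx : E.N x ≤ E.N v := E.le_norm_of_tendsto_norm_posPart_sub (fun k => E.mem_rearr (hu k))
    (fun k => rearr_nonneg _) hv hN' <| hKOC.tendsto_norm_posPart_rearr_sub hx hint hxinf hu hux
      (fun _ => E.mem_aemeasurable hv) (fun _ => hv0)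
      (hlim'.mono fun s hs => by simpa using hs.sub_const (v s))
  have hvx : HLP α v x := hlp_of_tendsto_ae (fun k => hint _ (hu k)) hux hlim
    fun t ht => rearr_eq_of_antitoneOn hv_anti hv0 hright hsupp ht
  have hv_eq : ∀ t, 0 < t → v t = rearr α x t := fun t ht => by
    by_cases h : rearr α v = rearr α x
    · rw [← h, rearr_eq_of_antitoneOn hv_anti hv0 hright hsupp ht]
    · exact absurd hNx (not_le.2 (hLKM v hv hvx h))
  have hlimx : ∀ᵐ s ∂muI α, Tendsto (fun k => rearr α (u k) s) atTop (𝓝 (rearr α x s)) := by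
    filter_upwards [hlim', ae_muI_of_pos (α := α) hv_eq] with s hs hvs
    rwa [← hvs]
  have hexcess := hKOC.tendsto_norm_posPart_rearr_sub hx hint hxinf hu hux (b := fun _ => rearr α x)
    (fun _ => aemeasurable_rearr (E.tendsto_distr hx)) (fun _ => rearr_nonneg x)
    (hlimx.mono fun s hs => by simpa using hs.sub_const (rearr α x s))
  have hdeficit := hKOC.tendsto_norm_posPart_rearr_sub hx hint hxinf (fun _ => hx)
    (fun _ _ _ => le_rfl) (fun k => aemeasurable_rearr (E.tendsto_distr (hu k)))
    (fun k => rearr_nonneg _) (hlimx.mono fun s hs => by simpa using hs.const_sub (rearr α x s))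
  exact squeeze_zero (fun k => E.norm_nonneg' _)
    (fun k => E.norm_sub_le_norm_posPart_add (E.mem_rearr (hu k)) (E.mem_rearr hx))
    (by simpa using hexcess.add hdeficit)

end SymmetricBFS

theorem koc_and_lkm_point_implies_llukm_point_general (α : ℝ≥0∞)
    (E : SymmetricBFS α) (x : ℝ → ℝ) (hx : E.Mem x)
    (hKOC : E.IsKOCPoint x) (hLKM : E.IsLKMPoint x)
    (hinf : rearrInftyZero α x) :
    E.IsLLUKMPoint x := by
  intro u hu hux hN
  refine tendsto_of_subseq_tendsto fun ns hns => ?_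
  have hd : ∀ n, Tendsto (distr α (u (ns n))) atTop (𝓝 0) := fun n => E.tendsto_distr (hu _)
  obtain ⟨φ, v, hφ, hv_anti, hv0, hright, hv_le, hlim⟩ :=
    exists_subseq_tendsto_ae_of_antitoneOn (f := fun n => rearr α (u (ns n))) (g := maxf α x)
      (fun n => rearr_antitoneOn (hd n)) (fun n => rearr_nonneg _)
      fun n t ht => (rearr_le_maxf (hd n) ht (hLKM.integrableOn_rearr hx (hu _) t)).trans
        (hux _ t ht)
  have hsupp : ∀ t, 0 < t → α ≤ ENNReal.ofReal t → v t = 0 := fun t ht hα =>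
    le_antisymm (hv_le t 0 ht fun n => (rearr_eq_zero_of_le hα _).le) (hv0 t)
  exact ⟨φ, hKOC.tendsto_norm_rearr_sub_of_tendsto_ae hLKM hx hinf (fun _ => hu _) (fun _ => hux _)
    (hN.comp (hns.comp hφ.tendsto_atTop)) hv_anti hv0 hright hsupp hlim⟩

/-- If `x ∈ E` is a point of `K`-order continuity and an `LKM` point with
`x*(∞) = 0`, then `x` is an `LLUKM` point. -/
theorem koc_and_lkm_point_implies_llukm_point (α : ℝ≥0∞) (hα : α = 1 ∨ α = ∞)
    (E : SymmetricBFS α) (x : ℝ → ℝ) (hx : E.Mem x)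
    (hKOC : E.IsKOCPoint x) (hLKM : E.IsLKMPoint x)
    (hinf : rearrInftyZero α x) :
    E.IsLLUKMPoint x :=
  koc_and_lkm_point_implies_llukm_point_general α E x hx hKOC hLKM hinf
end
end

section
/- In the space E=L^∞ on I=[0,∞) with the essential supremum norm, the function x=χ_[0,∞) is a ULUKM point, but x is not an H_g point (witnessed by y_n=χ_(1/n,∞), which converge to x in measure with ‖y_n‖_∞=‖x‖_∞=1 while ‖x−y_n‖_∞=1 for all n). -/
open MeasureTheory Filter Topology Set
open scoped ENNReal

noncomputable section

variable {α : ℝ≥0∞}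

/-- The norm of `L^∞` on `I = [0,∞)`. -/
def LinfN (x : ℝ → ℝ) : ℝ := (eLpNorm x ⊤ (muI ∞)).toReal

/-- The function `x = χ_{[0,∞)}`. -/
def xLinf : ℝ → ℝ := Set.indicator (Set.Ici (0 : ℝ)) fun _ => (1 : ℝ)

/-- The witness sequence `y_n = χ_{(1/n,∞)}`. -/
def yLinf : ℕ → ℝ → ℝ := fun n => Set.indicator (Set.Ioi (1 / (n : ℝ))) fun _ => (1 : ℝ)

/-!
Since `x = χ_{[0,∞)}` takes the value `1` on a set of infinite measure, `x* ≡ 1` and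
`x** ≡ 1`. If `x ≺ u`, the antitone function `u*` has all averages `(1/t) ∫₀ᵗ u* ≥ 1`, which
forces `u* ≥ 1` on `(0, ∞)`: were `u*(s) < 1`, the averages over `(0, t)` would be at most
`(u*(0) s + u*(s) (t - s)) / t < 1` for large `t`. Together with `u* ≤ ‖u‖_∞` this gives `‖x* - u*‖_∞ ≤ ‖u‖_∞ - 1`, which
tends to `0` when `‖u‖_∞ → 1`.

The `y_n` agree with `x` off `[0, 1/n]`, so they converge to `x` in measure, yet
`x - y_n = χ_{[0, 1/n]}` has norm `1`.
-/

theorem Antitone.le_of_forall_le_integral_Ioc_div {f : ℝ → ℝ} (hf : Antitone f) {m : ℝ}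
    (h : ∀ t, 0 < t → m ≤ (∫ x in Ioc 0 t, f x) / t) {s : ℝ} (hs : 0 < s) : m ≤ f s := by
  by_contra! hlt
  have hint : ∀ p q : ℝ, IntegrableOn f (Ioc p q) :=
    fun p q => (hf.locallyIntegrable.integrableOn_isCompact isCompact_Icc).mono_set
      Ioc_subset_Icc_self
  have hconst : ∀ p q c : ℝ, (∀ x ∈ Ioc p q, f x ≤ c) → p ≤ q →
      ∫ x in Ioc p q, f x ≤ c * (q - p) := fun p q c hc hpq => by
    calc ∫ x in Ioc p q, f x ≤ ∫ _ in Ioc p q, c :=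
          setIntegral_mono_on (hint p q) (integrableOn_const measure_Ioc_lt_top.ne)
            measurableSet_Ioc hc
      _ = c * (q - p) := by
        rw [setIntegral_const, Real.volume_real_Ioc_of_le hpq, smul_eq_mul, mul_comm]
  have hbound : ∀ t, s ≤ t → ∫ x in Ioc 0 t, f x ≤ f 0 * s + f s * (t - s) := fun t hst => by
    rw [← Ioc_union_Ioc_eq_Ioc hs.le hst, setIntegral_union (Ioc_disjoint_Ioc_of_le le_rfl)
      measurableSet_Ioc (hint 0 s) (hint s t)]
    simpa using add_le_add (hconst 0 s (f 0) (fun x hx => hf hx.1.le) hs.le)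
      (hconst s t (f s) (fun x hx => hf hx.1.le) hst)
  -- chosen so that `m * t > f 0 * s + f s * (t - s)`, contradicting `hbound` and `h t`
  set t := s + ((f 0 - f s) * s + 1) / (m - f s)
  have hgap : 0 < m - f s := sub_pos.2 hlt
  have hts : (m - f s) * (t - s) = (f 0 - f s) * s + 1 := by
    simp only [t, add_sub_cancel_left]; field_simp
  have hst : s < t := by
    have : 0 ≤ f 0 - f s := sub_nonneg.2 (hf hs.le)
    simp only [t, lt_add_iff_pos_right]; positivity
  have hmt : m * t ≤ ∫ x in Ioc 0 t, f x := (le_div_iff₀ (hs.trans hst)).1 (h t (hs.trans hst))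
  nlinarith [hbound t hst.le, mul_pos hgap hs]

lemma muI_top : muI ∞ = volume.restrict (Ioi 0) := by
  calc muI ∞ = volume.restrict (Ici 0) := by
        rw [muI]; congr 1; ext s; simp [ENNReal.ofReal_lt_top]
    _ = volume.restrict (Ioi 0) := Measure.restrict_congr_set Ioi_ae_eq_Ici.symm

lemma ae_pos_muI_top : ∀ᵐ s ∂(muI ∞), 0 < s :=
  muI_top ▸ ae_restrict_mem measurableSet_Ioi

section Rearrangement

variable {u : ℝ → ℝ}

lemma distr_eq_zero_of_lpNorm_le (hu : MemLp u ∞ (muI α)) {lam : ℝ}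
    (h : lpNorm u ∞ (muI α) ≤ lam) : distr α u lam = 0 := by
  refine measure_mono_null (fun s hs => ?_) (ae_iff.1 (ae_le_lpNorm_exponent_top hu))
  exact not_le.2 (h.trans_lt hs)

lemma pos_and_distr_le_of_lpNorm_lt (hu : MemLp u ∞ (muI α)) {lam : ℝ}
    (h : lpNorm u ∞ (muI α) < lam) (t : ℝ) : 0 < lam ∧ distr α u lam ≤ ENNReal.ofReal t :=
  ⟨lpNorm_nonneg.trans_lt h, by rw [distr_eq_zero_of_lpNorm_le hu h.le]; exact zero_le⟩

lemma rearr_le_lpNorm (hu : MemLp u ∞ (muI α)) (t : ℝ) : rearr α u t ≤ lpNorm u ∞ (muI α) :=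
  le_of_forall_pos_le_add fun ε hε =>
    csInf_le ⟨0, fun _ hlam => hlam.1.le⟩ (pos_and_distr_le_of_lpNorm_lt hu (by linarith) t)

lemma rearr_antitone (hu : MemLp u ∞ (muI α)) : Antitone (rearr α u) := fun t₁ _ h =>
  csInf_le_csInf ⟨0, fun _ hlam => hlam.1.le⟩
    ⟨_, pos_and_distr_le_of_lpNorm_lt hu (lt_add_one _) t₁⟩
    fun _ hlam => ⟨hlam.1, hlam.2.trans (ENNReal.ofReal_le_ofReal h)⟩

end Rearrangement

lemma abs_xLinf_le_one (s : ℝ) : |xLinf s| ≤ 1 := by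
  by_cases hs : s ∈ Ici 0 <;> simp [xLinf, hs]

lemma distr_xLinf_of_lt_one {lam : ℝ} (h : lam < 1) : distr ∞ xLinf lam = ∞ := by
  have hsub : Ioi (0 : ℝ) ⊆ {s | lam < |xLinf s|} := fun s (hs : 0 < s) => by
    simpa [xLinf, hs.le] using h
  refine top_unique ((measure_mono hsub).trans' ?_)
  simp [muI_top, Real.volume_Ioi]

lemma distr_xLinf_of_one_le {lam : ℝ} (h : 1 ≤ lam) : distr ∞ xLinf lam = 0 :=
  measure_mono_null (fun s (hs : lam < |xLinf s|) =>
    (not_le.2 hs ((abs_xLinf_le_one s).trans h)).elim) measure_empty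

lemma rearr_xLinf : rearr ∞ xLinf = 1 := by
  funext t
  have hset : {lam : ℝ | 0 < lam ∧ distr ∞ xLinf lam ≤ ENNReal.ofReal t} = Ici 1 := by
    ext lam
    refine ⟨fun ⟨_, hd⟩ => mem_Ici.2 (not_lt.1 fun hlt => ?_), fun h1 => ⟨one_pos.trans_le h1, ?_⟩⟩
    · rw [distr_xLinf_of_lt_one hlt] at hd
      exact ENNReal.ofReal_ne_top (top_le_iff.1 hd)
    · rw [distr_xLinf_of_one_le h1]; exact zero_le
  rw [rearr, hset, csInf_Ici, Pi.one_apply]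

lemma maxf_xLinf {t : ℝ} (ht : 0 < t) : maxf ∞ xLinf t = 1 := by
  rw [maxf, rearr_xLinf, Pi.one_def, setIntegral_const, Real.volume_real_Ioc_of_le ht.le,
    smul_eq_mul, mul_one, sub_zero, div_self ht.ne']

lemma one_le_rearr_of_HLP_xLinf {u : ℝ → ℝ} (hu : MemLp u ∞ (muI ∞)) (hxu : HLP ∞ xLinf u)
    {s : ℝ} (hs : 0 < s) : 1 ≤ rearr ∞ u s :=
  (rearr_antitone hu).le_of_forall_le_integral_Ioc_div (fun t ht => maxf_xLinf ht ▸ hxu t ht) hs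

lemma LinfN_le_of_ae_abs_le {f : ℝ → ℝ} {C : ℝ} (hC : 0 ≤ C) (h : ∀ᵐ s ∂(muI ∞), |f s| ≤ C) :
    LinfN f ≤ C :=
  ENNReal.toReal_le_of_le_ofReal hC (by
    rw [eLpNorm_exponent_top]; exact eLpNormEssSup_le_of_ae_bound h)

lemma LinfN_rearr_xLinf_sub_le {u : ℝ → ℝ} (hu : MemLp u ∞ (muI ∞)) (hxu : HLP ∞ xLinf u) :
    LinfN (rearr ∞ xLinf - rearr ∞ u) ≤ LinfN u - 1 := by
  have hnorm : LinfN u = lpNorm u ∞ (muI ∞) := toReal_eLpNorm hu.1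
  have hle : ∀ s, rearr ∞ u s ≤ LinfN u := hnorm ▸ rearr_le_lpNorm hu
  refine LinfN_le_of_ae_abs_le (sub_nonneg.2 ((one_le_rearr_of_HLP_xLinf hu hxu one_pos).trans
    (hle 1))) ?_
  filter_upwards [ae_pos_muI_top] with s hs
  rw [Pi.sub_apply, rearr_xLinf, Pi.one_apply, abs_le]
  constructor <;> linarith [one_le_rearr_of_HLP_xLinf hu hxu hs, hle s]

lemma LinfN_sub_comm (f g : ℝ → ℝ) : LinfN (f - g) = LinfN (g - f) := by
  rw [LinfN, LinfN, eLpNorm_sub_comm]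

lemma LinfN_indicator_one {B : Set ℝ} (hB : MeasurableSet B) (h : volume (B ∩ Ioi 0) ≠ 0) :
    LinfN (B.indicator fun _ => (1 : ℝ)) = 1 := by
  rw [LinfN, eLpNorm_indicator_const' hB (by rwa [muI_top, Measure.restrict_apply hB])
    ENNReal.top_ne_zero]
  simp

lemma LinfN_xLinf : LinfN xLinf = 1 :=
  LinfN_indicator_one measurableSet_Ici (by
    simp [inter_eq_right.2 Ioi_subset_Ici_self, Real.volume_Ioi])

lemma LinfN_yLinf (n : ℕ) : LinfN (yLinf n) = 1 :=
  LinfN_indicator_one measurableSet_Ioi (by simp [Real.volume_Ioi])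

lemma memLp_yLinf (n : ℕ) : MemLp (yLinf n) ∞ (muI ∞) :=
  (memLp_top_const 1).indicator measurableSet_Ioi

lemma xLinf_sub_yLinf (n : ℕ) : xLinf - yLinf n = (Icc 0 (1 / (n : ℝ))).indicator fun _ => 1 := by
  rw [xLinf, yLinf, ← indicator_sdiff (Ioi_subset_Ici (by positivity)), Ici_sdiff_Ioi]

lemma LinfN_xLinf_sub_yLinf {n : ℕ} (hn : 1 ≤ n) : LinfN (xLinf - yLinf n) = 1 := by
  rw [xLinf_sub_yLinf]
  have hn' : (0 : ℝ) < n := by exact_mod_cast hn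
  refine LinfN_indicator_one measurableSet_Icc (pos_iff_ne_zero.1 ?_)
  calc 0 < volume (Ioo (0 : ℝ) (1 / n)) := by simp [hn']
    _ ≤ volume (Icc 0 (1 / (n : ℝ)) ∩ Ioi 0) :=
      measure_mono fun s hs => ⟨Ioo_subset_Icc_self hs, hs.1⟩

lemma tendstoInMeasure_yLinf : TendstoInMeasure (muI ∞) yLinf atTop xLinf := by
  intro ε hε
  have hsub : ∀ n : ℕ, {s | ε ≤ edist (yLinf n s) (xLinf s)} ⊆ Icc 0 (1 / (n : ℝ)) := by
    intro n s (hs : ε ≤ edist (yLinf n s) (xLinf s))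
    by_contra hout
    have hdiff := congrFun (xLinf_sub_yLinf n) s
    rw [Pi.sub_apply, indicator_of_notMem hout, sub_eq_zero] at hdiff
    rw [hdiff, edist_self] at hs
    exact hε.ne' (nonpos_iff_eq_zero.1 hs)
  have hbound : ∀ n : ℕ, muI ∞ {s | ε ≤ edist (yLinf n s) (xLinf s)} ≤ ENNReal.ofReal (1 / n) :=
    fun n => (measure_mono (hsub n)).trans <| muI_top ▸ (Measure.restrict_apply_le _ _).trans
      (by simp)
  refine tendsto_of_tendsto_of_tendsto_of_le_of_le tendsto_const_nhds ?_ (fun n => zero_le)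
    hbound
  simpa using ENNReal.tendsto_ofReal tendsto_one_div_atTop_nhds_zero_nat

/-- In `E = L^∞` on `I = [0,∞)`, the function `x = χ_{[0,∞)}` is a `ULUKM`
point but not an `H_g` point, witnessed by `y_n = χ_{(1/n,∞)}`: the `y_n` converge to `x`
in measure with `‖y_n‖_∞ = ‖x‖_∞ = 1`, while `‖x − y_n‖_∞ = 1` for all `n ≥ 1`. -/
theorem linf_ulukm_point_not_hg_point :
    (∀ u : ℕ → ℝ → ℝ, (∀ n, MemLp (u n) ⊤ (muI ∞)) →
        (∀ n, HLP ∞ xLinf (u n)) →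
        Tendsto (fun n => LinfN (u n)) atTop (𝓝 (LinfN xLinf)) →
        Tendsto (fun n => LinfN (rearr ∞ xLinf - rearr ∞ (u n))) atTop (𝓝 0)) ∧
    ¬ (∀ u : ℕ → ℝ → ℝ, (∀ n, MemLp (u n) ⊤ (muI ∞)) →
        TendstoInMeasure (muI ∞) u atTop xLinf →
        Tendsto (fun n => LinfN (u n)) atTop (𝓝 (LinfN xLinf)) →
        Tendsto (fun n => LinfN (u n - xLinf)) atTop (𝓝 0)) ∧
    TendstoInMeasure (muI ∞) yLinf atTop xLinf ∧
    (∀ n : ℕ, 1 ≤ n → LinfN (yLinf n) = 1) ∧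
    LinfN xLinf = 1 ∧
    (∀ n : ℕ, 1 ≤ n → LinfN (xLinf - yLinf n) = 1) := by
  refine ⟨?_, ?_, tendstoInMeasure_yLinf, fun n _ => LinfN_yLinf n, LinfN_xLinf,
    fun n hn => LinfN_xLinf_sub_yLinf hn⟩
  · intro u hu hxu hnorm
    rw [LinfN_xLinf] at hnorm
    refine squeeze_zero (fun n => ENNReal.toReal_nonneg)
      (fun n => LinfN_rearr_xLinf_sub_le (hu n) (hxu n)) ?_
    simpa using hnorm.sub_const 1
  · intro hHg
    have hlim := hHg yLinf memLp_yLinf tendstoInMeasure_yLinf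
      (by simp only [LinfN_yLinf, LinfN_xLinf, tendsto_const_nhds])
    have hone : ∀ᶠ n in atTop, LinfN (yLinf n - xLinf) = 1 :=
      (eventually_ge_atTop 1).mono fun n hn => by rw [LinfN_sub_comm, LinfN_xLinf_sub_yLinf hn]
    exact zero_ne_one (tendsto_nhds_unique (hlim.congr' hone) tendsto_const_nhds)
end
end

section
/- Let ψ be a strictly concave increasing function on [0,∞) with ψ(0)=ψ(0⁺)=0 and ψ(∞)=∞, and on I=[0,1] let E=Λ_{1,ψ'}∩L^∞ be equipped with the norm ‖x‖_E=‖x‖_{Λ_{1,ψ'}}+‖x‖_{L^∞}. Then the function x(t)=(1−t)χ_[0,1](t) is an LLUKM point of E, but x is not a point of order continuity in E. -/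
/-!
Write `x* = 1 - t` for the rearrangement of `x17` and `vₙ = uₙ*`. If `uₙ ≺ x17`, then
`‖uₙ‖_∞ ≤ 1 = ‖x17‖_∞` and the primitives `Gₙ(t) = ∫₀ᵗ (x* - vₙ)` are nonnegative, so
`‖uₙ‖_Λ ≤ ‖x17‖_Λ` by Hardy's lemma (the layer-cake formula over the superlevel sets `(0, c)`
of the decreasing weight `ψ'`); convergence of the `E`-norms therefore forces
`∫ (x* - vₙ) ψ' → 0`. As `ψ'` is strictly decreasing, the levels between `ψ'(t + δ)` and `ψ'(t)`
see `Gₙ(t)` up to `δ`, so `Gₙ → 0` pointwise, hence uniformly (the `Gₙ` are `1`-Lipschitz).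
Averaging the monotone `vₙ` over short intervals then gives `vₙ → x*` uniformly on `(0, 1)`,
which controls both parts of the norm of `vₙ - x*`.

The bumps `½ · χ_(0, 1/(n+2))` lie below `x17` and tend to `0` everywhere, but keep `L^∞`-norm
`½`, so `x17` is not a point of order continuity.
-/

open MeasureTheory Filter Topology Set
open scoped ENNReal

noncomputable section

variable {α : ℝ≥0∞}

/-- The Lorentz norm `‖x‖_{Λ_{1,w}} = ∫₀¹ x*(t) w(t) dt` on `I = [0,1]`. -/
def lorN (w : ℝ → ℝ) (x : ℝ → ℝ) : ℝ := ∫ t in Set.Ioo (0 : ℝ) 1, rearr 1 x t * w t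

/-- The norm of `E = Λ_{1,ψ'} ∩ L^∞`: `‖x‖_E = ‖x‖_{Λ_{1,ψ'}} + ‖x‖_{L^∞}`. -/
def EN17 (w : ℝ → ℝ) (x : ℝ → ℝ) : ℝ := lorN w x + (eLpNorm x ⊤ (muI 1)).toReal

/-- Membership in `E = Λ_{1,ψ'} ∩ L^∞`. -/
def Mem17 (w : ℝ → ℝ) (x : ℝ → ℝ) : Prop :=
  AEMeasurable x (muI 1) ∧
  MeasureTheory.IntegrableOn (fun t => rearr 1 x t * w t) (Set.Ioo (0 : ℝ) 1) volume ∧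
  MemLp x ⊤ (muI 1)

/-- The function `x(t) = (1 − t)·χ_{[0,1]}(t)`. -/
def x17 : ℝ → ℝ := Set.indicator (Set.Icc (0 : ℝ) 1) fun t => 1 - t

section Rearrangement

variable {f : ℝ → ℝ}

lemma distr_antitone (f : ℝ → ℝ) : Antitone (distr α f) :=
  fun _ _ hab => measure_mono fun _ hs => hab.trans_lt hs

lemma distr_eq_zero_of_ae_abs_le {M c : ℝ} (h : ∀ᵐ s ∂muI α, |f s| ≤ M) (hMc : M ≤ c) :
    distr α f c = 0 :=
  measure_mono_null (fun _ hs => not_le.2 (hMc.trans_lt hs)) (ae_iff.1 h)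

lemma ae_abs_le_of_distr_eq_zero {c : ℝ} (h : distr α f c = 0) : ∀ᵐ s ∂muI α, |f s| ≤ c := by
  simpa [ae_iff, distr] using h

lemma rearr_nonneg (f : ℝ → ℝ) (t : ℝ) : 0 ≤ rearr α f t :=
  Real.sInf_nonneg fun _ h => h.1.le

lemma rearr_le_of_distr_le {c t : ℝ} (hc : 0 < c) (h : distr α f c ≤ ENNReal.ofReal t) :
    rearr α f t ≤ c :=
  csInf_le ⟨0, fun _ h => h.1.le⟩ ⟨hc, h⟩

lemma rearr_le_of_ae_abs_le {M : ℝ} (hM : 0 < M) (h : ∀ᵐ s ∂muI α, |f s| ≤ M) (t : ℝ) :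
    rearr α f t ≤ M :=
  rearr_le_of_distr_le hM (by simp [distr_eq_zero_of_ae_abs_le h le_rfl])

lemma rearr_antitone_s17 {M : ℝ} (hM : 0 < M) (h : ∀ᵐ s ∂muI α, |f s| ≤ M) :
    Antitone (rearr α f) := fun a b hab =>
  csInf_le_csInf ⟨0, fun _ h => h.1.le⟩ ⟨M, hM, by simp [distr_eq_zero_of_ae_abs_le h le_rfl]⟩
    fun _ h => ⟨h.1, h.2.trans (ENNReal.ofReal_le_ofReal hab)⟩

lemma distr_le_of_rearr_lt {M c t : ℝ} (hM : 0 < M) (h : ∀ᵐ s ∂muI α, |f s| ≤ M)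
    (hlt : rearr α f t < c) : distr α f c ≤ ENNReal.ofReal t := by
  have hne : {c | 0 < c ∧ distr α f c ≤ ENNReal.ofReal t}.Nonempty :=
    ⟨M, hM, by simp [distr_eq_zero_of_ae_abs_le h le_rfl]⟩
  obtain ⟨c', hc', hc'c⟩ := exists_lt_of_csInf_lt hne hlt
  exact (distr_antitone f hc'c.le).trans hc'.2

lemma ofReal_le_eLpNorm_top_of_distr_ne_zero {c : ℝ} (hc : distr α f c ≠ 0) :
    ENNReal.ofReal c ≤ eLpNorm f ⊤ (muI α) := by
  by_contra! hlt
  refine hc (distr_eq_zero_of_ae_abs_le (M := c) ?_ le_rfl)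
  filter_upwards [ae_le_eLpNormEssSup (f := f) (μ := muI α)] with s hs
  rw [← eLpNorm_exponent_top, Real.enorm_eq_ofReal_abs] at hs
  exact ((ENNReal.ofReal_lt_ofReal_iff'.1 (hs.trans_lt hlt)).1).le

end Rearrangement

section EssSup

variable {X : Type*} [MeasurableSpace X] {μ : Measure X} {g : X → ℝ}

lemma eLpNorm_top_toReal_le {c : ℝ} (hc : 0 ≤ c) (h : ∀ᵐ s ∂μ, |g s| ≤ c) :
    (eLpNorm g ⊤ μ).toReal ≤ c := by
  refine ENNReal.toReal_le_of_le_ofReal hc ?_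
  rw [eLpNorm_exponent_top]
  exact eLpNormEssSup_le_of_ae_bound (by simpa only [Real.norm_eq_abs] using h)

lemma exists_ae_abs_le_of_memLp_top (h : MemLp g ⊤ μ) :
    ∃ M, 0 < M ∧ ∀ᵐ s ∂μ, |g s| ≤ M := by
  have hfin : eLpNormEssSup g μ ≠ ⊤ := by
    simpa only [eLpNorm_exponent_top] using h.2.ne
  refine ⟨(eLpNormEssSup g μ).toReal + 1, by positivity, ?_⟩
  filter_upwards [ae_le_eLpNormEssSup (f := g) (μ := μ)] with s hs
  have := ENNReal.toReal_mono hfin hs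
  rw [toReal_enorm, Real.norm_eq_abs] at this
  linarith

end EssSup

section UnitInterval

lemma muI_one : muI 1 = volume.restrict (Ico 0 1) := by
  simp only [muI, ← ENNReal.ofReal_one, ENNReal.ofReal_lt_ofReal_iff zero_lt_one]
  rfl

lemma ae_mem_Ioo_muI_one : ∀ᵐ s ∂muI 1, s ∈ Ioo (0 : ℝ) 1 := by
  rw [muI_one, ← Measure.restrict_congr_set Ioo_ae_eq_Ico]
  exact ae_restrict_mem measurableSet_Ioo

end UnitInterval

section IntegralIoc

variable {v : ℝ → ℝ} {a b c : ℝ}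

lemma Antitone.integrableOn_Ioc (hv : Antitone v) : IntegrableOn v (Ioc a b) :=
  ((hv.antitoneOn _).integrableOn_isCompact isCompact_Icc).mono_set Ioc_subset_Icc_self

lemma setIntegral_Ioc_le_of_antitone (hv : Antitone v) (hab : a ≤ b) :
    ∫ s in Ioc a b, v s ≤ (b - a) * v a := by
  have : ∫ s in Ioc a b, v s ≤ ∫ _ in Ioc a b, v a :=
    setIntegral_mono_on hv.integrableOn_Ioc (integrableOn_const measure_Ioc_lt_top.ne)
      measurableSet_Ioc fun s hs => hv hs.1.le
  simpa [Real.volume_real_Ioc_of_le hab] using this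

lemma le_setIntegral_Ioc_of_antitone (hv : Antitone v) (hab : a ≤ b) :
    (b - a) * v b ≤ ∫ s in Ioc a b, v s := by
  have : ∫ _ in Ioc a b, v b ≤ ∫ s in Ioc a b, v s :=
    setIntegral_mono_on (integrableOn_const measure_Ioc_lt_top.ne) hv.integrableOn_Ioc
      measurableSet_Ioc fun s hs => hv hs.2
  simpa [Real.volume_real_Ioc_of_le hab] using this

lemma setIntegral_Ioc_add_Ioc (hv : IntegrableOn v (Ioc a c)) (hab : a ≤ b) (hbc : b ≤ c) :
    (∫ s in Ioc a b, v s) + ∫ s in Ioc b c, v s = ∫ s in Ioc a c, v s := by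
  rw [← Ioc_union_Ioc_eq_Ioc hab hbc] at hv ⊢
  exact (setIntegral_union (Ioc_disjoint_Ioc_of_le le_rfl) measurableSet_Ioc
    (hv.mono_set subset_union_left) (hv.mono_set subset_union_right)).symm

lemma abs_setIntegral_Ioc_sub_le {C : ℝ} (hv : IntegrableOn v (Ioc 0 1))
    (hC : ∀ s ∈ Ioc (0 : ℝ) 1, |v s| ≤ C) (ha : 0 ≤ a) (hab : a ≤ b) (hb : b ≤ 1) :
    |(∫ s in Ioc 0 b, v s) - ∫ s in Ioc 0 a, v s| ≤ C * (b - a) := by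
  rw [← setIntegral_Ioc_add_Ioc (hv.mono_set (Ioc_subset_Ioc_right hb)) ha hab, add_sub_cancel_left]
  have := norm_setIntegral_le_of_norm_le_const (f := v) (measure_Ioc_lt_top (μ := volume))
    fun s hs => (Real.norm_eq_abs _).trans_le (hC s ⟨ha.trans_lt hs.1, hs.2.trans hb⟩)
  rwa [Real.volume_real_Ioc_of_le hab, Real.norm_eq_abs] at this

end IntegralIoc

section X17

lemma x17_of_mem {s : ℝ} (h0 : 0 ≤ s) (h1 : s ≤ 1) : x17 s = 1 - s :=
  indicator_of_mem (show s ∈ Icc 0 1 from ⟨h0, h1⟩) _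

lemma abs_x17_le_one (s : ℝ) : |x17 s| ≤ 1 := by
  by_cases hs : s ∈ Icc (0 : ℝ) 1
  · rw [x17_of_mem hs.1 hs.2, abs_le]
    constructor <;> linarith [hs.1, hs.2]
  · simp [x17, indicator_of_notMem hs]

lemma distr_x17 {c : ℝ} (h0 : 0 ≤ c) : distr 1 x17 c = ENNReal.ofReal (1 - c) := by
  have : {s | c < |x17 s|} ∩ Ico 0 1 = Ico 0 (1 - c) := by
    ext s
    simp only [mem_inter_iff, mem_ofPred_eq, mem_Ico]
    constructor
    · rintro ⟨hs, hs0, hs1⟩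
      rw [x17_of_mem hs0 hs1.le, abs_of_nonneg (by linarith)] at hs
      exact ⟨hs0, by linarith⟩
    · rintro ⟨hs0, hs1⟩
      rw [x17_of_mem hs0 (by linarith), abs_of_nonneg (by linarith)]
      exact ⟨by linarith, hs0, by linarith⟩
  rw [distr, muI_one, Measure.restrict_apply' measurableSet_Ico, this, Real.volume_Ico, sub_zero]

lemma rearr_x17 {t : ℝ} (ht : t ∈ Ioc (0 : ℝ) 1) : rearr 1 x17 t = 1 - t := by
  have hdistr : ∀ c, 0 < c → (distr 1 x17 c ≤ ENNReal.ofReal t ↔ 1 - t ≤ c) := by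
    intro c hc
    rcases lt_or_ge c 1 with hc1 | hc1
    · rw [distr_x17 hc.le, ENNReal.ofReal_le_ofReal_iff ht.1.le]
      constructor <;> intro <;> linarith
    · simp only [distr_eq_zero_of_ae_abs_le (ae_of_all _ abs_x17_le_one) hc1, zero_le, true_iff]
      linarith [ht.1]
  rcases ht.2.lt_or_eq with ht1 | rfl
  · have : {c | 0 < c ∧ distr 1 x17 c ≤ ENNReal.ofReal t} = Ici (1 - t) := by
      ext c
      simp only [mem_ofPred_eq, mem_Ici]
      exact ⟨fun h => (hdistr c h.1).1 h.2, fun h => ⟨by linarith, (hdistr c (by linarith)).2 h⟩⟩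
    rw [rearr, this, csInf_Ici]
  · have : {c | 0 < c ∧ distr 1 x17 c ≤ ENNReal.ofReal 1} = Ioi 0 := by
      ext c
      simp only [mem_ofPred_eq, mem_Ioi]
      exact ⟨fun h => h.1, fun h => ⟨h, (hdistr c h).2 (by linarith)⟩⟩
    rw [rearr, this, csInf_Ioi, sub_self]

lemma rearr_x17_le_one (t : ℝ) : rearr 1 x17 t ≤ 1 :=
  rearr_le_of_ae_abs_le one_pos (ae_of_all _ abs_x17_le_one) t

lemma integral_Ioc_rearr_x17 {t : ℝ} (ht : t ∈ Ioc (0 : ℝ) 1) :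
    ∫ s in Ioc 0 t, rearr 1 x17 s = t - t ^ 2 / 2 := by
  rw [setIntegral_congr_fun measurableSet_Ioc
    fun s hs => rearr_x17 ⟨hs.1, hs.2.trans ht.2⟩, ← intervalIntegral.integral_of_le ht.1.le]
  simp only [intervalIntegral.integral_sub intervalIntegrable_const
    intervalIntegral.intervalIntegrable_id, integral_id, intervalIntegral.integral_const,
    smul_eq_mul]
  ring

lemma eLpNorm_x17 : (eLpNorm x17 ⊤ (muI 1)).toReal = 1 := by
  refine le_antisymm (eLpNorm_top_toReal_le zero_le_one (ae_of_all _ abs_x17_le_one))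
    (le_of_forall_lt_imp_le_of_dense fun c hc => ?_)
  rcases lt_or_ge c 0 with hc0 | hc0
  · exact hc0.le.trans ENNReal.toReal_nonneg
  have hfin : eLpNorm x17 ⊤ (muI 1) ≠ ⊤ := by
    refine ne_top_of_le_ne_top ENNReal.ofReal_ne_top (?_ : _ ≤ ENNReal.ofReal 1)
    rw [eLpNorm_exponent_top]
    exact eLpNormEssSup_le_of_ae_bound
      (ae_of_all _ fun s => (Real.norm_eq_abs _).trans_le (abs_x17_le_one s))
  refine (ENNReal.ofReal_le_iff_le_toReal hfin).1 (ofReal_le_eLpNorm_top_of_distr_ne_zero ?_)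
  rw [distr_x17 hc0]
  exact ENNReal.ofReal_ne_zero_iff.2 (by linarith)

end X17

section Hardy

variable {g w : ℝ → ℝ} {C : ℝ}

lemma integrable_indicator_regionBetween (hg : Measurable g)
    (hgC : ∀ s ∈ Ioo (0 : ℝ) 1, |g s| ≤ C) (hw : Measurable w)
    (hw0 : ∀ s ∈ Ioo (0 : ℝ) 1, 0 ≤ w s) (hw_int : IntegrableOn w (Ioo 0 1)) :
    Integrable ((regionBetween 0 w (Ioo 0 1)).indicator fun p => g p.1) (volume.prod volume) := by
  have hR : MeasurableSet (regionBetween 0 w (Ioo (0 : ℝ) 1)) :=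
    measurableSet_regionBetween measurable_const hw measurableSet_Ioo
  have hfin : volume.prod volume (regionBetween 0 w (Ioo (0 : ℝ) 1)) ≠ ⊤ := by
    rw [volume_regionBetween_eq_integral (f := 0) integrableOn_zero hw_int measurableSet_Ioo hw0]
    exact ENNReal.ofReal_ne_top
  refine (integrable_indicator_iff hR).2 (Measure.integrableOn_of_bounded hfin
    (hg.comp measurable_fst).aestronglyMeasurable (M := C) ?_)
  filter_upwards [ae_restrict_mem hR] with p hp
  exact (Real.norm_eq_abs _).trans_le (hgC _ hp.1)

/-- Fubini on the region under the graph of `w`. -/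
lemma setIntegral_mul_eq_integral_superlevel (hg : Measurable g)
    (hgC : ∀ s ∈ Ioo (0 : ℝ) 1, |g s| ≤ C) (hw : Measurable w)
    (hw0 : ∀ s ∈ Ioo (0 : ℝ) 1, 0 ≤ w s) (hw_int : IntegrableOn w (Ioo 0 1)) :
    IntegrableOn (fun y => ∫ s in {s ∈ Ioo (0 : ℝ) 1 | y < w s}, g s) (Ioi 0) ∧
      ∫ s in Ioo 0 1, g s * w s = ∫ y in Ioi 0, ∫ s in {s ∈ Ioo (0 : ℝ) 1 | y < w s}, g s := by
  set F := (regionBetween 0 w (Ioo 0 1)).indicator fun p => g p.1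
  have hF : Integrable F (volume.prod volume) :=
    integrable_indicator_regionBetween hg hgC hw hw0 hw_int
  have hslice_s : ∀ s, ∫ y, F (s, y) = (Ioo 0 1).indicator (fun s => g s * w s) s := by
    intro s
    by_cases hs : s ∈ Ioo (0 : ℝ) 1
    · have : (fun y => F (s, y)) = (Ioo 0 (w s)).indicator fun _ => g s := by
        ext y
        simp [F, regionBetween, indicator, hs.1, hs.2]
      rw [this, integral_indicator_const _ measurableSet_Ioo, indicator_of_mem hs,
        Real.volume_real_Ioo_of_le (hw0 s hs), sub_zero, smul_eq_mul, mul_comm]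
    · rw [mem_Ioo] at hs
      simp [F, regionBetween, indicator, hs]
  have hslice_y : ∀ y, ∫ s, F (s, y) =
      (Ioi 0).indicator (fun y => ∫ s in {s ∈ Ioo (0 : ℝ) 1 | y < w s}, g s) y := by
    intro y
    by_cases hy : 0 < y
    · have : (fun s => F (s, y)) = {s ∈ Ioo (0 : ℝ) 1 | y < w s}.indicator g := by
        ext s
        simp [F, regionBetween, indicator, hy]
      have hS : MeasurableSet {s ∈ Ioo (0 : ℝ) 1 | y < w s} :=
        measurableSet_Ioo.inter (measurableSet_lt measurable_const hw)
      rw [this, integral_indicator hS,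
        indicator_of_mem (show y ∈ Ioi 0 from hy)]
    · simp [F, regionBetween, indicator, hy]
  constructor
  · rw [← integrable_indicator_iff measurableSet_Ioi]
    simpa only [hslice_y] using hF.integral_prod_right
  · rw [← integral_indicator measurableSet_Ioo, ← integral_indicator measurableSet_Ioi]
    simp_rw [← hslice_s, ← hslice_y]
    exact integral_integral_swap hF

lemma exists_superlevel_ae_eq_Ioc (hw : AntitoneOn w (Ioi 0)) (y : ℝ) :
    ∃ c ∈ Icc (0 : ℝ) 1, {s ∈ Ioo (0 : ℝ) 1 | y < w s} =ᵐ[volume] Ioc 0 c ∧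
      (∀ t ∈ Ioo (0 : ℝ) 1, y < w t → t ≤ c) ∧ ∀ b, 0 < b → w b ≤ y → c ≤ b := by
  set S := {s ∈ Ioo (0 : ℝ) 1 | y < w s}
  have hbdd : BddAbove (insert 0 S) := ⟨1, by rintro _ (rfl | h); exacts [zero_le_one, h.1.2.le]⟩
  have hle : ∀ t ∈ S, t ≤ sSup (insert 0 S) := fun t ht => le_csSup hbdd (mem_insert_of_mem _ ht)
  refine ⟨sSup (insert 0 S), ⟨le_csSup hbdd (mem_insert _ _), csSup_le (insert_nonempty _ _)
    (by rintro _ (rfl | h); exacts [zero_le_one, h.1.2.le])⟩, ?_,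
    fun t ht hyt => hle t ⟨ht, hyt⟩, fun b hb hwb => csSup_le (insert_nonempty _ _) ?_⟩
  · have hsub : S ⊆ Ioc 0 (sSup (insert 0 S)) := fun s hs => ⟨hs.1.1, hle s hs⟩
    have hsup : Ioo 0 (sSup (insert 0 S)) ⊆ S := by
      intro s hs
      obtain ⟨z, hz, hsz⟩ := exists_lt_of_lt_csSup (insert_nonempty _ _) hs.2
      rcases hz with rfl | hz
      · exact absurd hs.1 hsz.not_gt
      exact ⟨⟨hs.1, hsz.trans hz.1.2⟩, hz.2.trans_le (hw hs.1 (hs.1.trans hsz) hsz.le)⟩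
    exact hsub.eventuallyLE.antisymm (Ioo_ae_eq_Ioc.symm.le.trans hsup.eventuallyLE)
  · rintro _ (rfl | hs)
    · exact hb.le
    by_contra! h
    exact (hw hb (hb.trans h) h.le).not_gt (hwb.trans_lt hs.2)

lemma setIntegral_superlevel_nonneg (hw : AntitoneOn w (Ioi 0))
    (hG : ∀ c ∈ Icc (0 : ℝ) 1, 0 ≤ ∫ s in Ioc 0 c, g s) (y : ℝ) :
    0 ≤ ∫ s in {s ∈ Ioo (0 : ℝ) 1 | y < w s}, g s := by
  obtain ⟨c, hc, hS, -⟩ := exists_superlevel_ae_eq_Ioc hw y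
  rw [setIntegral_congr_set hS]
  exact hG c hc

/-- Hardy's lemma. -/
lemma setIntegral_mul_nonneg_of_primitive_nonneg (hg : Measurable g)
    (hgC : ∀ s ∈ Ioo (0 : ℝ) 1, |g s| ≤ C) (hw : Measurable w)
    (hw0 : ∀ s ∈ Ioo (0 : ℝ) 1, 0 ≤ w s) (hw_anti : AntitoneOn w (Ioi 0))
    (hw_int : IntegrableOn w (Ioo 0 1)) (hG : ∀ c ∈ Icc (0 : ℝ) 1, 0 ≤ ∫ s in Ioc 0 c, g s) :
    0 ≤ ∫ s in Ioo 0 1, g s * w s := by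
  rw [(setIntegral_mul_eq_integral_superlevel hg hgC hw hw0 hw_int).2]
  exact setIntegral_nonneg measurableSet_Ioi fun y _ => setIntegral_superlevel_nonneg hw_anti hG y

/-- A quantitative Hardy lemma: the levels `y ∈ (w (t + δ), w t)` of the layer-cake
representation each contribute at least the primitive of `g` at `t`, up to `C δ`. -/
lemma mul_sub_le_setIntegral_mul (hg : Measurable g) (hgC : ∀ s ∈ Ioc (0 : ℝ) 1, |g s| ≤ C)
    (hw : Measurable w) (hw_pos : ∀ s ∈ Ioi (0 : ℝ), 0 < w s) (hw_anti : AntitoneOn w (Ioi 0))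
    (hw_int : IntegrableOn w (Ioo 0 1)) (hG : ∀ c ∈ Icc (0 : ℝ) 1, 0 ≤ ∫ s in Ioc 0 c, g s)
    {t δ : ℝ} (ht : 0 < t) (hδ : 0 < δ) (htδ : t + δ < 1) :
    (w t - w (t + δ)) * ((∫ s in Ioc 0 t, g s) - C * δ) ≤ ∫ s in Ioo 0 1, g s * w s := by
  have htδ' : t + δ ∈ Ioi (0 : ℝ) := show 0 < t + δ by linarith
  obtain ⟨hint, hlayer⟩ := setIntegral_mul_eq_integral_superlevel hg
    (fun s hs => hgC s (Ioo_subset_Ioc_self hs)) hw (fun s hs => (hw_pos s hs.1).le) hw_int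
  have hg_int : IntegrableOn g (Ioc 0 1) := Measure.integrableOn_of_bounded measure_Ioc_lt_top.ne
    hg.aestronglyMeasurable ((ae_restrict_iff' measurableSet_Ioc).2
      (ae_of_all _ fun s hs => (Real.norm_eq_abs _).trans_le (hgC s hs)))
  have hlevel : ∀ y ∈ Ioo (w (t + δ)) (w t),
      (∫ s in Ioc 0 t, g s) - C * δ ≤ ∫ s in {s ∈ Ioo (0 : ℝ) 1 | y < w s}, g s := by
    intro y hy
    obtain ⟨c, hc, hS, hle_c, hc_le⟩ := exists_superlevel_ae_eq_Ioc hw_anti y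
    have htc : t ≤ c := hle_c t ⟨ht, by linarith⟩ hy.2
    have hct : c - t ≤ δ := by linarith [hc_le _ htδ' hy.1.le]
    have hC : 0 ≤ C := (abs_nonneg _).trans (hgC 1 ⟨one_pos, le_rfl⟩)
    rw [setIntegral_congr_set hS]
    linarith [(abs_sub_le_iff.1 (abs_setIntegral_Ioc_sub_le hg_int hgC ht.le htc hc.2)).2,
      mul_le_mul_of_nonneg_left hct hC]
  have hsub : Ioo (w (t + δ)) (w t) ⊆ Ioi 0 := fun y hy => (hw_pos _ htδ').trans hy.1
  rw [hlayer]
  calc (w t - w (t + δ)) * ((∫ s in Ioc 0 t, g s) - C * δ)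
      = ∫ _ in Ioo (w (t + δ)) (w t), (∫ s in Ioc 0 t, g s) - C * δ := by
        rw [setIntegral_const, Real.volume_real_Ioo_of_le (hw_anti ht htδ' (by linarith)),
          smul_eq_mul]
    _ ≤ ∫ y in Ioo (w (t + δ)) (w t), ∫ s in {s ∈ Ioo (0 : ℝ) 1 | y < w s}, g s :=
        setIntegral_mono_on (integrableOn_const measure_Ioo_lt_top.ne) (hint.mono_set hsub)
          measurableSet_Ioo hlevel
    _ ≤ ∫ y in Ioi 0, ∫ s in {s ∈ Ioo (0 : ℝ) 1 | y < w s}, g s :=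
        setIntegral_mono_set hint (ae_of_all _ fun y => setIntegral_superlevel_nonneg hw_anti hG y)
          hsub.eventuallyLE

end Hardy

section Uniform

lemma eventually_forall_Icc_le_of_lipschitz {G : ℕ → ℝ → ℝ} {L : ℝ} (hL0 : 0 ≤ L)
    (hL : ∀ n p q, 0 ≤ p → p ≤ q → q ≤ 1 → G n q - G n p ≤ L * (q - p))
    (hpt : ∀ t ∈ Ico (0 : ℝ) 1, ∀ ε > 0, ∀ᶠ n in atTop, G n t ≤ ε) {ε : ℝ} (hε : 0 < ε) :
    ∀ᶠ n in atTop, ∀ t ∈ Icc (0 : ℝ) 1, G n t ≤ ε := by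
  obtain ⟨N, hN⟩ := exists_nat_gt (2 * L / ε)
  have hK : (0 : ℝ) < N + 1 := by positivity
  have hgrid : ∀ᶠ n in atTop, ∀ j ∈ Finset.range (N + 1), G n (j / (N + 1)) ≤ ε / 2 := by
    refine (eventually_all_finset _).2 fun j hj => hpt _ ⟨by positivity, ?_⟩ _ (half_pos hε)
    rw [div_lt_one hK]
    exact_mod_cast Finset.mem_range.1 hj
  filter_upwards [hgrid] with n hn t ht
  set j := min ⌊t * (N + 1)⌋₊ N
  have hjt : (j : ℝ) / (N + 1) ≤ t := by
    rw [div_le_iff₀ hK]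
    exact (Nat.cast_le.2 (min_le_left _ _)).trans (Nat.floor_le (by positivity [ht.1]))
  have htj : t - j / (N + 1) ≤ 1 / (N + 1) := by
    rw [sub_le_iff_le_add, ← add_div, le_div_iff₀ hK]
    rcases le_total ⌊t * (N + 1)⌋₊ N with h | h
    · rw [show j = ⌊t * (N + 1)⌋₊ from min_eq_left h]
      linarith [Nat.lt_floor_add_one (t * (N + 1))]
    · rw [show j = N from min_eq_right h]
      nlinarith [ht.2]
  have hLK : L * (1 / (N + 1)) < ε / 2 := by
    rw [mul_one_div, div_lt_iff₀ hK]
    rw [div_lt_iff₀ hε] at hN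
    nlinarith
  calc G n t ≤ G n (j / (N + 1)) + L * (t - j / (N + 1)) := by
        linarith [hL n _ t (by positivity) hjt ht.2]
    _ ≤ ε / 2 + L * (1 / (N + 1)) :=
        add_le_add (hn j (Finset.mem_range.2 (Nat.lt_succ_of_le (min_le_right _ _))))
          (mul_le_mul_of_nonneg_left htj hL0)
    _ ≤ ε := by linarith

variable {v : ℝ → ℝ} {ε r : ℝ}

lemma le_one_sub_add_of_integral_close (hv : Antitone v)
    (hX : ∀ t ∈ Ioc (0 : ℝ) 1, ∫ s in Ioc 0 t, v s ≤ t - t ^ 2 / 2)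
    (hη : ∀ t ∈ Ioc (0 : ℝ) 1, t - t ^ 2 / 2 - ∫ s in Ioc 0 t, v s ≤ ε ^ 2 / 8)
    (hε : 0 < ε) (hr : r ∈ Ioo (0 : ℝ) 1) :
    v r ≤ 1 - r + ε := by
  rcases le_or_gt r (ε / 2) with hrε | hrε
  · have hmean := le_setIntegral_Ioc_of_antitone hv hr.1.le
    have : r * v r ≤ r * (1 - r / 2) := by linarith [hX r ⟨hr.1, hr.2.le⟩]
    linarith [le_of_mul_le_mul_left this hr.1]
  · have hmean := le_setIntegral_Ioc_of_antitone hv (sub_le_self r (half_pos hε).le)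
    have hsplit := setIntegral_Ioc_add_Ioc hv.integrableOn_Ioc (sub_pos.2 hrε).le
      (sub_le_self r (half_pos hε).le)
    have := hη (r - ε / 2) ⟨sub_pos.2 hrε, by linarith [hr.2]⟩
    have : ε / 2 * v r ≤ ε / 2 * (1 - r + ε) := by
      nlinarith [hX r ⟨hr.1, hr.2.le⟩]
    exact le_of_mul_le_mul_left this (half_pos hε)

lemma one_sub_sub_le_of_integral_close (hv : Antitone v) (hv0 : ∀ s, 0 ≤ v s)
    (hX : ∀ t ∈ Ioc (0 : ℝ) 1, ∫ s in Ioc 0 t, v s ≤ t - t ^ 2 / 2)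
    (hη : ∀ t ∈ Ioc (0 : ℝ) 1, t - t ^ 2 / 2 - ∫ s in Ioc 0 t, v s ≤ ε ^ 2 / 8)
    (hε : 0 < ε) (hr : r ∈ Ioo (0 : ℝ) 1) :
    1 - r - ε ≤ v r := by
  rcases le_or_gt 1 (r + ε / 2) with hrε | hrε
  · linarith [hv0 r]
  · have hmean :=
      setIntegral_Ioc_le_of_antitone hv (le_add_of_nonneg_right (a := r) (half_pos hε).le)
    have hsplit := setIntegral_Ioc_add_Ioc hv.integrableOn_Ioc hr.1.le
      (le_add_of_nonneg_right (half_pos hε).le)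
    have := hη (r + ε / 2) ⟨by linarith [hr.1], hrε.le⟩
    have : ε / 2 * (1 - r - ε) ≤ ε / 2 * v r := by
      nlinarith [hX r ⟨hr.1, hr.2.le⟩]
    exact le_of_mul_le_mul_left this (half_pos hε)

end Uniform

section HLP

variable {u : ℝ → ℝ} {M : ℝ}

lemma integral_Ioc_rearr_le_of_HLP (hu : HLP 1 u x17) {t : ℝ} (ht : t ∈ Ioc (0 : ℝ) 1) :
    ∫ s in Ioc 0 t, rearr 1 u s ≤ t - t ^ 2 / 2 := by
  have h := hu t ht.1
  rw [maxf, maxf, integral_Ioc_rearr_x17 ht] at h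
  exact (div_le_div_iff_of_pos_right ht.1).1 h

lemma rearr_le_of_HLP (hM : 0 < M) (hMu : ∀ᵐ s ∂muI 1, |u s| ≤ M) (hu : HLP 1 u x17) {t : ℝ}
    (ht : t ∈ Ioc (0 : ℝ) 1) : rearr 1 u t ≤ 1 - t / 2 := by
  have hmean := le_setIntegral_Ioc_of_antitone (rearr_antitone_s17 hM hMu) ht.1.le
  have : t * rearr 1 u t ≤ t * (1 - t / 2) := by
    linarith [integral_Ioc_rearr_le_of_HLP hu ht]
  exact le_of_mul_le_mul_left this ht.1

lemma rearr_le_one_of_HLP (hM : 0 < M) (hMu : ∀ᵐ s ∂muI 1, |u s| ≤ M) (hu : HLP 1 u x17)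
    {t : ℝ} (ht : 0 < t) : rearr 1 u t ≤ 1 := by
  have ht' : min t 1 ∈ Ioc (0 : ℝ) 1 := ⟨lt_min ht one_pos, min_le_right _ _⟩
  calc rearr 1 u t ≤ rearr 1 u (min t 1) := rearr_antitone_s17 hM hMu (min_le_left _ _)
    _ ≤ 1 - min t 1 / 2 := rearr_le_of_HLP hM hMu hu ht'
    _ ≤ 1 := by linarith [ht'.1]

lemma eLpNorm_toReal_le_one_of_HLP (hM : 0 < M) (hMu : ∀ᵐ s ∂muI 1, |u s| ≤ M)
    (hu : HLP 1 u x17) : (eLpNorm u ⊤ (muI 1)).toReal ≤ 1 := by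
  refine eLpNorm_top_toReal_le zero_le_one (ae_abs_le_of_distr_eq_zero ?_)
  refine le_antisymm (ENNReal.le_of_forall_pos_le_add fun ε hε _ => ?_) zero_le
  have ht : min (ε : ℝ) 1 ∈ Ioc (0 : ℝ) 1 := ⟨lt_min hε one_pos, min_le_right _ _⟩
  calc distr 1 u 1 ≤ ENNReal.ofReal (min ε 1) :=
        distr_le_of_rearr_lt hM hMu (by linarith [rearr_le_of_HLP hM hMu hu ht, ht.1])
    _ ≤ ENNReal.ofReal ε := ENNReal.ofReal_le_ofReal (min_le_left _ _)
    _ = 0 + ε := by simp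

end HLP

section LorentzNorm

variable {w : ℝ → ℝ} {f : ℝ → ℝ}

lemma integrableOn_rearr_mul {M : ℝ} (hM : 0 < M) (hMf : ∀ᵐ s ∂muI 1, |f s| ≤ M)
    (hw0 : ∀ s ∈ Ioo (0 : ℝ) 1, 0 ≤ w s) (hw_int : IntegrableOn w (Ioo 0 1)) :
    IntegrableOn (fun s => rearr 1 f s * w s) (Ioo 0 1) := by
  refine Integrable.mono' (hw_int.const_mul M)
    ((rearr_antitone_s17 hM hMf).measurable.aestronglyMeasurable.mul hw_int.1) ?_
  refine (ae_restrict_iff' measurableSet_Ioo).2 (ae_of_all _ fun s hs => ?_)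
  rw [Real.norm_eq_abs, abs_mul, abs_of_nonneg (rearr_nonneg f s), abs_of_nonneg (hw0 s hs)]
  exact mul_le_mul_of_nonneg_right (rearr_le_of_ae_abs_le hM hMf s) (hw0 s hs)

lemma lorN_nonneg (hw0 : ∀ s ∈ Ioo (0 : ℝ) 1, 0 ≤ w s) (f : ℝ → ℝ) : 0 ≤ lorN w f :=
  setIntegral_nonneg measurableSet_Ioo fun s hs => mul_nonneg (rearr_nonneg f s) (hw0 s hs)

lemma EN17_le_of_abs_le {ε : ℝ} (hε : 0 < ε) (hf : ∀ s ∈ Ioo (0 : ℝ) 1, |f s| ≤ ε)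
    (hw0 : ∀ s ∈ Ioo (0 : ℝ) 1, 0 ≤ w s) (hw_int : IntegrableOn w (Ioo 0 1)) :
    EN17 w f ≤ ε * (1 + ∫ s in Ioo 0 1, w s) := by
  have hεf : ∀ᵐ s ∂muI 1, |f s| ≤ ε := by
    filter_upwards [ae_mem_Ioo_muI_one] with s hs using hf s hs
  have hlor : lorN w f ≤ ε * ∫ s in Ioo 0 1, w s := by
    rw [lorN, ← integral_const_mul]
    exact setIntegral_mono_on (integrableOn_rearr_mul hε hεf hw0 hw_int) (hw_int.const_mul ε)
      measurableSet_Ioo fun s hs =>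
        mul_le_mul_of_nonneg_right (rearr_le_of_ae_abs_le hε hεf s) (hw0 s hs)
  have := eLpNorm_top_toReal_le hε.le hεf
  rw [EN17]
  linarith

lemma lorN_congr {w' : ℝ → ℝ} (h : EqOn w w' (Ioo 0 1)) (f : ℝ → ℝ) : lorN w f = lorN w' f :=
  setIntegral_congr_fun measurableSet_Ioo fun s hs => congrArg (rearr 1 f s * ·) (h hs)

lemma EN17_congr {w' : ℝ → ℝ} (h : EqOn w w' (Ioo 0 1)) : EN17 w = EN17 w' :=
  funext fun f => by rw [EN17, EN17, lorN_congr h]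

lemma Mem17_congr {w' : ℝ → ℝ} (h : EqOn w w' (Ioo 0 1)) : Mem17 w = Mem17 w' :=
  funext fun f => by
    rw [Mem17, Mem17, integrableOn_congr_fun (g := fun s => rearr 1 f s * w' s)
      (fun s hs => congrArg (rearr 1 f s * ·) (h hs)) measurableSet_Ioo]

end LorentzNorm

section ConcaveWeight

variable {ψ : ℝ → ℝ}

lemma deriv_pos_of_concaveOn_of_strictMonoOn (hconc : ConcaveOn ℝ (Ici 0) ψ)
    (hmono : StrictMonoOn ψ (Ici 0)) (hdiff : ∀ t ∈ Ioi (0 : ℝ), DifferentiableAt ℝ ψ t)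
    {t : ℝ} (ht : t ∈ Ioi (0 : ℝ)) : 0 < deriv ψ t := by
  have ht0 : t ∈ Ici (0 : ℝ) := mem_Ici.2 (mem_Ioi.1 ht).le
  have ht1 : t + 1 ∈ Ici (0 : ℝ) := by simp only [mem_Ici]; linarith [mem_Ioi.1 ht]
  refine lt_of_lt_of_le ?_ (hconc.slope_le_of_hasDerivAt ht0 ht1 (by linarith)
    (hdiff t ht).hasDerivAt)
  rw [slope_def_field]
  exact div_pos (sub_pos.2 (hmono ht0 ht1 (by linarith))) (by linarith)

lemma integrableOn_deriv_of_concaveOn (hconc : ConcaveOn ℝ (Ici 0) ψ)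
    (hmono : StrictMonoOn ψ (Ici 0)) (hdiff : ∀ t ∈ Ioi (0 : ℝ), DifferentiableAt ℝ ψ t) :
    IntegrableOn (deriv ψ) (Ioo 0 1) := by
  have hanti : AntitoneOn (deriv ψ) (Ioi 0) :=
    (hconc.subset Ioi_subset_Ici_self (convex_Ioi 0)).antitoneOn_deriv hdiff
  have ha : ∀ n : ℕ, 1 / ((n : ℝ) + 1) ∈ Ioc (0 : ℝ) 1 := fun n =>
    ⟨by positivity, (div_le_one (by positivity)).2 (by linarith [n.cast_nonneg (α := ℝ)])⟩
  have hsub : ∀ n : ℕ, uIcc (1 / ((n : ℝ) + 1)) 1 ⊆ Ioi 0 := fun n s hs =>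
    (ha n).1.trans_le (uIcc_of_le (ha n).2 ▸ hs).1
  refine (integrableOn_Ioc_of_intervalIntegral_norm_bounded (I := ψ 1 - ψ 0)
    (fun n => ((hanti.mono (hsub n)).integrableOn_isCompact isCompact_uIcc).mono_set
      (Ioc_subset_Icc_self.trans Icc_subset_uIcc))
    tendsto_one_div_add_atTop_nhds_zero_nat tendsto_const_nhds
    (Eventually.of_forall fun n => ?_)).mono_set Ioo_subset_Ioc_self
  have hpos : ∀ s ∈ Ioc (1 / ((n : ℝ) + 1)) 1, ‖deriv ψ s‖ = deriv ψ s := fun s hs =>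
    Real.norm_of_nonneg (deriv_pos_of_concaveOn_of_strictMonoOn hconc hmono hdiff
      ((ha n).1.trans hs.1)).le
  rw [setIntegral_congr_fun measurableSet_Ioc hpos, ← intervalIntegral.integral_of_le (ha n).2,
    intervalIntegral.integral_deriv_eq_sub (fun s hs => hdiff s (hsub n hs))
      (hanti.mono (hsub n)).intervalIntegrable]
  linarith [hmono (mem_Ici.2 le_rfl) (mem_Ici.2 (ha n).1.le) (ha n).1]

end ConcaveWeight

section HLPRearrangement

variable {w u : ℝ → ℝ} {M : ℝ}

lemma abs_rearr_x17_sub_rearr_le_one (hM : 0 < M) (hMu : ∀ᵐ s ∂muI 1, |u s| ≤ M)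
    (hu : HLP 1 u x17) {s : ℝ} (hs : 0 < s) : |rearr 1 x17 s - rearr 1 u s| ≤ 1 :=
  abs_sub_le_of_nonneg_of_le (rearr_nonneg _ _) (rearr_x17_le_one s) (rearr_nonneg _ _)
    (rearr_le_one_of_HLP hM hMu hu hs)

lemma integrableOn_rearr_x17_sub_rearr (hM : 0 < M) (hMu : ∀ᵐ s ∂muI 1, |u s| ≤ M) {a b : ℝ} :
    IntegrableOn (fun s => rearr 1 x17 s - rearr 1 u s) (Ioc a b) :=
  (rearr_antitone_s17 one_pos (ae_of_all _ abs_x17_le_one)).integrableOn_Ioc.sub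
    (rearr_antitone_s17 hM hMu).integrableOn_Ioc

lemma integral_Ioc_rearr_x17_sub_rearr (hM : 0 < M) (hMu : ∀ᵐ s ∂muI 1, |u s| ≤ M) {t : ℝ}
    (ht : t ∈ Ioc (0 : ℝ) 1) :
    ∫ s in Ioc 0 t, (rearr 1 x17 s - rearr 1 u s) =
      t - t ^ 2 / 2 - ∫ s in Ioc 0 t, rearr 1 u s := by
  rw [integral_sub (rearr_antitone_s17 one_pos (ae_of_all _ abs_x17_le_one)).integrableOn_Ioc
    (rearr_antitone_s17 hM hMu).integrableOn_Ioc, integral_Ioc_rearr_x17 ht]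

lemma integral_Ioc_rearr_x17_sub_rearr_nonneg (hM : 0 < M) (hMu : ∀ᵐ s ∂muI 1, |u s| ≤ M)
    (hu : HLP 1 u x17) {c : ℝ} (hc : c ∈ Icc (0 : ℝ) 1) :
    0 ≤ ∫ s in Ioc 0 c, (rearr 1 x17 s - rearr 1 u s) := by
  rcases hc.1.eq_or_lt with rfl | hc0
  · simp
  rw [integral_Ioc_rearr_x17_sub_rearr hM hMu ⟨hc0, hc.2⟩]
  linarith [integral_Ioc_rearr_le_of_HLP hu ⟨hc0, hc.2⟩]

lemma EN17_nonneg (hw0 : ∀ s ∈ Ioo (0 : ℝ) 1, 0 ≤ w s) (f : ℝ → ℝ) : 0 ≤ EN17 w f :=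
  add_nonneg (lorN_nonneg hw0 f) ENNReal.toReal_nonneg

/-- `u ≺ x17` forces `‖u‖_∞ ≤ 1 = ‖x17‖_∞`, so the gap of the `E`-norms dominates the gap of
the Lorentz norms. -/
lemma setIntegral_rearr_x17_sub_rearr_mul_mem_Icc (hw : Measurable w)
    (hw0 : ∀ s ∈ Ioo (0 : ℝ) 1, 0 ≤ w s) (hw_anti : AntitoneOn w (Ioi 0))
    (hw_int : IntegrableOn w (Ioo 0 1)) (hM : 0 < M) (hMu : ∀ᵐ s ∂muI 1, |u s| ≤ M)
    (hu : HLP 1 u x17) :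
    ∫ s in Ioo 0 1, (rearr 1 x17 s - rearr 1 u s) * w s ∈ Icc 0 (EN17 w x17 - EN17 w u) := by
  have hx := integrableOn_rearr_mul one_pos (ae_of_all _ abs_x17_le_one) hw0 hw_int
  have hlor : ∫ s in Ioo 0 1, (rearr 1 x17 s - rearr 1 u s) * w s = lorN w x17 - lorN w u := by
    simp_rw [sub_mul]
    exact integral_sub hx (integrableOn_rearr_mul hM hMu hw0 hw_int)
  refine ⟨setIntegral_mul_nonneg_of_primitive_nonneg
    ((rearr_antitone_s17 one_pos (ae_of_all _ abs_x17_le_one)).measurable.sub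
      (rearr_antitone_s17 hM hMu).measurable)
    (fun s hs => abs_rearr_x17_sub_rearr_le_one hM hMu hu hs.1) hw hw0 hw_anti hw_int
    (fun c hc => integral_Ioc_rearr_x17_sub_rearr_nonneg hM hMu hu hc), ?_⟩
  rw [hlor, EN17, EN17, eLpNorm_x17]
  linarith [eLpNorm_toReal_le_one_of_HLP hM hMu hu]

end HLPRearrangement

section LLUKM

variable {w : ℝ → ℝ} {u : ℕ → ℝ → ℝ}

lemma tendsto_setIntegral_rearr_x17_sub_rearr_mul (hw : Measurable w)
    (hw0 : ∀ s ∈ Ioo (0 : ℝ) 1, 0 ≤ w s) (hw_anti : AntitoneOn w (Ioi 0))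
    (hw_int : IntegrableOn w (Ioo 0 1)) (hu : ∀ n, MemLp (u n) ⊤ (muI 1))
    (hHLP : ∀ n, HLP 1 (u n) x17) (hnorm : Tendsto (fun n => EN17 w (u n)) atTop (𝓝 (EN17 w x17))) :
    Tendsto (fun n => ∫ s in Ioo 0 1, (rearr 1 x17 s - rearr 1 (u n) s) * w s) atTop (𝓝 0) := by
  choose M hM hMu using fun n => exists_ae_abs_le_of_memLp_top (hu n)
  have h := fun n =>
    setIntegral_rearr_x17_sub_rearr_mul_mem_Icc hw hw0 hw_anti hw_int (hM n) (hMu n) (hHLP n)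
  refine squeeze_zero (fun n => (h n).1) (fun n => (h n).2) ?_
  simpa using (tendsto_const_nhds (x := EN17 w x17)).sub hnorm

lemma eventually_integral_Ioc_rearr_x17_sub_rearr_le (hw : Measurable w)
    (hw_pos : ∀ s ∈ Ioi (0 : ℝ), 0 < w s) (hw_anti : StrictAntiOn w (Ioi 0))
    (hw_int : IntegrableOn w (Ioo 0 1)) (hu : ∀ n, MemLp (u n) ⊤ (muI 1))
    (hHLP : ∀ n, HLP 1 (u n) x17) (hnorm : Tendsto (fun n => EN17 w (u n)) atTop (𝓝 (EN17 w x17)))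
    {t : ℝ} (ht : t ∈ Ico (0 : ℝ) 1) {ε : ℝ} (hε : 0 < ε) :
    ∀ᶠ n in atTop, ∫ s in Ioc 0 t, (rearr 1 x17 s - rearr 1 (u n) s) ≤ ε := by
  rcases ht.1.eq_or_lt with rfl | ht0
  · simp [hε.le]
  choose M hM hMu using fun n => exists_ae_abs_le_of_memLp_top (hu n)
  set δ := min (ε / 2) ((1 - t) / 2)
  have hδ : 0 < δ := lt_min (by linarith) (by linarith [ht.2])
  have htδ : t + δ < 1 := by linarith [min_le_right (ε / 2) ((1 - t) / 2), ht.2]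
  have hgap : 0 < w t - w (t + δ) :=
    sub_pos.2 (hw_anti ht0 (show 0 < t + δ by positivity) (by linarith))
  filter_upwards [(tendsto_setIntegral_rearr_x17_sub_rearr_mul hw (fun s hs => (hw_pos s hs.1).le)
    hw_anti.antitoneOn hw_int hu hHLP hnorm).eventually
    (gt_mem_nhds (mul_pos hgap (half_pos hε)))] with n hn
  have hHardy := mul_sub_le_setIntegral_mul (g := fun s => rearr 1 x17 s - rearr 1 (u n) s)
    ((rearr_antitone_s17 one_pos (ae_of_all _ abs_x17_le_one)).measurable.sub
      (rearr_antitone_s17 (hM n) (hMu n)).measurable)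
    (fun s hs => abs_rearr_x17_sub_rearr_le_one (hM n) (hMu n) (hHLP n) hs.1) hw hw_pos
    hw_anti.antitoneOn hw_int
    (fun c hc => integral_Ioc_rearr_x17_sub_rearr_nonneg (hM n) (hMu n) (hHLP n) hc) ht0 hδ htδ
  have := lt_of_mul_lt_mul_left (hHardy.trans_lt hn) hgap.le
  linarith [min_le_left (ε / 2) ((1 - t) / 2)]

lemma eventually_abs_rearr_sub_rearr_x17_le (hw : Measurable w)
    (hw_pos : ∀ s ∈ Ioi (0 : ℝ), 0 < w s) (hw_anti : StrictAntiOn w (Ioi 0))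
    (hw_int : IntegrableOn w (Ioo 0 1)) (hu : ∀ n, MemLp (u n) ⊤ (muI 1))
    (hHLP : ∀ n, HLP 1 (u n) x17) (hnorm : Tendsto (fun n => EN17 w (u n)) atTop (𝓝 (EN17 w x17)))
    {ε : ℝ} (hε : 0 < ε) :
    ∀ᶠ n in atTop, ∀ r ∈ Ioo (0 : ℝ) 1, |rearr 1 (u n) r - rearr 1 x17 r| ≤ ε := by
  choose M hM hMu using fun n => exists_ae_abs_le_of_memLp_top (hu n)
  have hlip : ∀ n p q, 0 ≤ p → p ≤ q → q ≤ 1 →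
      (∫ s in Ioc 0 q, (rearr 1 x17 s - rearr 1 (u n) s)) -
        ∫ s in Ioc 0 p, (rearr 1 x17 s - rearr 1 (u n) s) ≤ 1 * (q - p) :=
    fun n p q hp hpq hq => (abs_sub_le_iff.1 (abs_setIntegral_Ioc_sub_le
      (integrableOn_rearr_x17_sub_rearr (hM n) (hMu n))
      (fun s hs => abs_rearr_x17_sub_rearr_le_one (hM n) (hMu n) (hHLP n) hs.1) hp hpq hq)).1
  filter_upwards [eventually_forall_Icc_le_of_lipschitz zero_le_one hlip
    (fun t ht ε hε => eventually_integral_Ioc_rearr_x17_sub_rearr_le hw hw_pos hw_anti hw_int hu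
      hHLP hnorm ht hε) (show 0 < ε ^ 2 / 8 by positivity)] with n hn r hr
  have hX : ∀ t ∈ Ioc (0 : ℝ) 1, ∫ s in Ioc 0 t, rearr 1 (u n) s ≤ t - t ^ 2 / 2 :=
    fun t ht => integral_Ioc_rearr_le_of_HLP (hHLP n) ht
  have hη : ∀ t ∈ Ioc (0 : ℝ) 1, t - t ^ 2 / 2 - ∫ s in Ioc 0 t, rearr 1 (u n) s ≤ ε ^ 2 / 8 :=
    fun t ht => by
      rw [← integral_Ioc_rearr_x17_sub_rearr (hM n) (hMu n) ht]
      exact hn t ⟨ht.1.le, ht.2⟩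
  have hv := rearr_antitone_s17 (hM n) (hMu n)
  rw [rearr_x17 ⟨hr.1, hr.2.le⟩, abs_le]
  constructor
  · linarith [one_sub_sub_le_of_integral_close hv (rearr_nonneg _) hX hη hε hr]
  · linarith [le_one_sub_add_of_integral_close hv hX hη hε hr]

theorem tendsto_EN17_rearr_sub_rearr_x17 (hw : Measurable w)
    (hw_pos : ∀ s ∈ Ioi (0 : ℝ), 0 < w s) (hw_anti : StrictAntiOn w (Ioi 0))
    (hw_int : IntegrableOn w (Ioo 0 1)) (hu : ∀ n, MemLp (u n) ⊤ (muI 1))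
    (hHLP : ∀ n, HLP 1 (u n) x17) (hnorm : Tendsto (fun n => EN17 w (u n)) atTop (𝓝 (EN17 w x17))) :
    Tendsto (fun n => EN17 w (rearr 1 (u n) - rearr 1 x17)) atTop (𝓝 0) := by
  have hw0 : ∀ s ∈ Ioo (0 : ℝ) 1, 0 ≤ w s := fun s hs => (hw_pos s hs.1).le
  have hC : 0 < 1 + ∫ s in Ioo 0 1, w s := by
    linarith [setIntegral_nonneg (μ := volume) measurableSet_Ioo hw0]
  refine tendsto_order.2 ⟨fun a ha => Eventually.of_forall fun n =>
    ha.trans_le (EN17_nonneg hw0 _), fun a ha => ?_⟩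
  have hε : 0 < a / (2 * (1 + ∫ s in Ioo 0 1, w s)) := by positivity
  filter_upwards [eventually_abs_rearr_sub_rearr_x17_le hw hw_pos hw_anti hw_int hu hHLP hnorm
    hε] with n hn
  calc EN17 w (rearr 1 (u n) - rearr 1 x17)
      ≤ a / (2 * (1 + ∫ s in Ioo 0 1, w s)) * (1 + ∫ s in Ioo 0 1, w s) :=
        EN17_le_of_abs_le hε hn hw0 hw_int
    _ < a := by
        rw [div_mul_eq_mul_div, mul_div_mul_right _ _ hC.ne']
        linarith

end LLUKM

section NotOrderContinuous

variable {w f : ℝ → ℝ}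

lemma le_EN17_of_distr_ne_zero (hw0 : ∀ s ∈ Ioo (0 : ℝ) 1, 0 ≤ w s) (hf : MemLp f ⊤ (muI 1))
    {c : ℝ} (hc : distr 1 f c ≠ 0) : c ≤ EN17 w f := by
  have := (ENNReal.ofReal_le_iff_le_toReal hf.2.ne).1 (ofReal_le_eLpNorm_top_of_distr_ne_zero hc)
  rw [EN17]
  linarith [lorN_nonneg hw0 f]

lemma distr_indicator_Ioo_ne_zero {a c h : ℝ} (ha : 0 < a) (ha1 : a ≤ 1) (hc : c < |h|) :
    distr 1 ((Ioo 0 a).indicator fun _ => h) c ≠ 0 := by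
  refine (measure_mono (μ := muI 1) (s := Ioo 0 a) fun s hs => ?_).trans_lt' ?_ |>.ne'
  · simpa only [mem_ofPred_eq, indicator_of_mem hs] using hc
  have hsub : Ioo 0 a ⊆ Ico 0 1 := fun s hs => ⟨hs.1.le, hs.2.trans_le ha1⟩
  rw [muI_one, Measure.restrict_apply measurableSet_Ioo, inter_eq_left.2 hsub, Real.volume_Ioo,
    sub_zero]
  exact ENNReal.ofReal_pos.2 ha

lemma exists_dominated_by_x17_not_tendsto_EN17 (hw0 : ∀ s ∈ Ioo (0 : ℝ) 1, 0 ≤ w s)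
    (hw_int : IntegrableOn w (Ioo 0 1)) :
    ∃ u : ℕ → ℝ → ℝ, (∀ n, Mem17 w (u n)) ∧
      (∀ n, ∀ᵐ s ∂muI 1, 0 ≤ u n s ∧ u n s ≤ |x17 s|) ∧
      (∀ᵐ s ∂muI 1, Tendsto (fun n => u n s) atTop (𝓝 0)) ∧
      ¬ Tendsto (fun n => EN17 w (u n)) atTop (𝓝 0) := by
  set u : ℕ → ℝ → ℝ := fun n => (Ioo 0 (1 / ((n : ℝ) + 2))).indicator fun _ => 1 / 2
  have hlen : ∀ n : ℕ, 1 / ((n : ℝ) + 2) ≤ 1 / 2 := fun n =>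
    one_div_le_one_div_of_le two_pos (by linarith [n.cast_nonneg (α := ℝ)])
  have hmeas : ∀ n, Measurable (u n) := fun n => measurable_const.indicator measurableSet_Ioo
  have hbdd : ∀ n, ∀ᵐ s ∂muI 1, |u n s| ≤ 1 / 2 := fun n => ae_of_all _ fun s => by
    by_cases hs : s ∈ Ioo 0 (1 / ((n : ℝ) + 2))
    · rw [show u n s = 1 / 2 from indicator_of_mem hs _, abs_of_pos one_half_pos]
    · rw [show u n s = 0 from indicator_of_notMem hs _, abs_zero]
      norm_num
  have hmem : ∀ n, Mem17 w (u n) := fun n =>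
    ⟨(hmeas n).aemeasurable, integrableOn_rearr_mul one_half_pos (hbdd n) hw0 hw_int,
      memLp_top_of_bound (hmeas n).aestronglyMeasurable _ (by simpa using hbdd n)⟩
  refine ⟨u, hmem, fun n => ?_, ae_of_all _ fun s => ?_, fun h => ?_⟩
  · filter_upwards [ae_mem_Ioo_muI_one] with s hs
    rw [x17_of_mem hs.1.le hs.2.le, abs_of_pos (sub_pos.2 hs.2)]
    by_cases hsn : s ∈ Ioo 0 (1 / ((n : ℝ) + 2))
    · simp only [u, indicator_of_mem hsn]
      constructor <;> linarith [hsn.2, hlen n]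
    · simp only [u, indicator_of_notMem hsn]
      constructor <;> linarith [hs.2]
  · rcases le_or_gt s 0 with hs | hs
    · simp [u, not_lt.2 hs]
    refine tendsto_const_nhds.congr' ?_
    filter_upwards [tendsto_natCast_atTop_atTop.eventually_gt_atTop (1 / s)] with n hn
    have : 1 / ((n : ℝ) + 2) < s := (one_div_lt (by positivity) hs).2 (by linarith)
    exact (indicator_of_notMem (fun h => h.2.not_gt this) _).symm
  · obtain ⟨n, hn⟩ := (h.eventually (gt_mem_nhds (show (0 : ℝ) < 1 / 4 by norm_num))).exists
    exact hn.not_ge (le_EN17_of_distr_ne_zero hw0 (hmem n).2.2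
      (distr_indicator_Ioo_ne_zero (by positivity) ((hlen n).trans one_half_lt_one.le)
        (by norm_num)))

end NotOrderContinuous

theorem lorentz_inter_linf_llukm_not_oc_general (ψ ψ' : ℝ → ℝ)
    (hconc : StrictConcaveOn ℝ (Set.Ici (0 : ℝ)) ψ)
    (hmono : StrictMonoOn ψ (Set.Ici (0 : ℝ)))
    (hderiv : ∀ t ∈ Set.Ioi (0 : ℝ), HasDerivAt ψ (ψ' t) t) :
    (∀ u : ℕ → ℝ → ℝ, (∀ n, Mem17 ψ' (u n)) → (∀ n, HLP 1 (u n) x17) →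
        Tendsto (fun n => EN17 ψ' (u n)) atTop (𝓝 (EN17 ψ' x17)) →
        Tendsto (fun n => EN17 ψ' (rearr 1 (u n) - rearr 1 x17)) atTop (𝓝 0)) ∧
    ¬ (∀ u : ℕ → ℝ → ℝ, (∀ n, Mem17 ψ' (u n)) →
        (∀ n, ∀ᵐ s ∂(muI 1), 0 ≤ u n s ∧ u n s ≤ |x17 s|) →
        (∀ᵐ s ∂(muI 1), Tendsto (fun n => u n s) atTop (𝓝 0)) →
        Tendsto (fun n => EN17 ψ' (u n)) atTop (𝓝 0)) := by
  have hdiff : ∀ t ∈ Ioi (0 : ℝ), DifferentiableAt ℝ ψ t :=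
    fun t ht => (hderiv t ht).differentiableAt
  have hψ' : EqOn (deriv ψ) ψ' (Ioo 0 1) := fun t ht => (hderiv t ht.1).deriv
  have hpos : ∀ t ∈ Ioi (0 : ℝ), 0 < deriv ψ t := fun t ht =>
    deriv_pos_of_concaveOn_of_strictMonoOn hconc.concaveOn hmono hdiff ht
  have hanti : StrictAntiOn (deriv ψ) (Ioi 0) :=
    (hconc.subset Ioi_subset_Ici_self (convex_Ioi 0)).strictAntiOn_deriv hdiff
  have hint := integrableOn_deriv_of_concaveOn hconc.concaveOn hmono hdiff
  rw [← EN17_congr hψ', ← Mem17_congr hψ']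
  refine ⟨fun u hmem hHLP hnorm => tendsto_EN17_rearr_sub_rearr_x17 (measurable_deriv ψ) hpos
    hanti hint (fun n => (hmem n).2.2) hHLP hnorm, fun hOC => ?_⟩
  obtain ⟨u, hmem, hdom, hlim, hnot⟩ :=
    exists_dominated_by_x17_not_tendsto_EN17 (fun s hs => (hpos s hs.1).le) hint
  exact hnot (hOC u hmem hdom hlim)

/-- For `E = Λ_{1,ψ'} ∩ L^∞` on `[0,1]` with norm
`‖·‖_{Λ_{1,ψ'}} + ‖·‖_{L^∞}` (where `ψ` is strictly concave, increasing, `ψ(0) = ψ(0⁺) = 0`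
and `ψ(∞) = ∞`), the function `x(t) = (1 − t)χ_{[0,1]}(t)` is an `LLUKM` point of `E`
but not a point of order continuity. -/
theorem lorentz_inter_linf_llukm_not_oc (ψ ψ' : ℝ → ℝ)
    (hconc : StrictConcaveOn ℝ (Set.Ici (0 : ℝ)) ψ)
    (hmono : StrictMonoOn ψ (Set.Ici (0 : ℝ)))
    (hzero : ψ 0 = 0)
    (hzero' : Tendsto ψ (𝓝[>] (0 : ℝ)) (𝓝 0))
    (hinfty : Tendsto ψ atTop atTop)
    (hderiv : ∀ t ∈ Set.Ioi (0 : ℝ), HasDerivAt ψ (ψ' t) t) :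
    (∀ u : ℕ → ℝ → ℝ, (∀ n, Mem17 ψ' (u n)) → (∀ n, HLP 1 (u n) x17) →
        Tendsto (fun n => EN17 ψ' (u n)) atTop (𝓝 (EN17 ψ' x17)) →
        Tendsto (fun n => EN17 ψ' (rearr 1 (u n) - rearr 1 x17)) atTop (𝓝 0)) ∧
    ¬ (∀ u : ℕ → ℝ → ℝ, (∀ n, Mem17 ψ' (u n)) →
        (∀ n, ∀ᵐ s ∂(muI 1), 0 ≤ u n s ∧ u n s ≤ |x17 s|) →
        (∀ᵐ s ∂(muI 1), Tendsto (fun n => u n s) atTop (𝓝 0)) →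
        Tendsto (fun n => EN17 ψ' (u n)) atTop (𝓝 0)) :=
  lorentz_inter_linf_llukm_not_oc_general ψ ψ' hconc hmono hderiv
end
end
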